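/- arXiv:2510.10907 — 5 statements merged into one kernel-verified Lean document; each statement's English description precedes it below -/
import Mathlib

section
/- Let s > 0, C > 0, and let μ be a (C,s)-Frostman probability measure on ℝ^n that is irreducible in ℝ^n. Then for every 1 ≤ k ≤ n there exist A ≥ 1 and open balls B_0,…,B_k ⊆ ℝ^n such that μ(B_i) > 0 for each i and the product B_0 × ⋯ × B_k is at distance at least 1/A from S_k; in particular, each normalized restriction μ_i = μ|_{B_i}/μ(B_i) is a (C/μ(B_i), s)-Frostman probability measure that is irreducible in ℝ^n. -/
open MeasureTheory Metric Set

noncomputable section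

/-- `ℝⁿ` as a Euclidean space. -/
abbrev Euc (n : ℕ) : Type := EuclideanSpace ℝ (Fin n)

/-- The topological support of a measure on `ℝⁿ`. -/
def msupp {n : ℕ} (μ : Measure (Euc n)) : Set (Euc n) :=
  {x | ∀ r : ℝ, 0 < r → 0 < μ (ball x r)}

/-- `μ` is a `(C, s)`-Frostman measure. -/
def Frostman {n : ℕ} (μ : Measure (Euc n)) (C s : ℝ) : Prop :=
  ∀ (x : Euc n) (r : ℝ), 0 < r → μ (ball x r) ≤ ENNReal.ofReal (C * r ^ s)

/-- `μ` is irreducible in the affine subspace `V`. -/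
def IrreducibleIn {n : ℕ} (μ : Measure (Euc n)) (V : AffineSubspace ℝ (Euc n)) : Prop :=
  ∀ V' : AffineSubspace ℝ (Euc n), V' < V → μ (V' : Set (Euc n)) = 0

/-- `μ` is `(w, τ)`-irreducible in the affine subspace `V`. -/
def WTIrreducible {n : ℕ} (μ : Measure (Euc n)) (V : AffineSubspace ℝ (Euc n)) (w τ : ℝ) : Prop :=
  ∀ H : AffineSubspace ℝ (Euc n), H < V →
    μ (thickening w (H : Set (Euc n))) ≤ ENNReal.ofReal τ * μ (closedBall 0 1)

/-- Measures `μ i` are in `C`-good position: supports in the closed unit ball, and the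
product of the supports is `1/C`-separated from the affinely dependent tuples. -/
def GoodPosition {n : ℕ} {ι : Type} [Fintype ι] (μ : ι → Measure (Euc n)) (C : ℝ) : Prop :=
  (∀ i, msupp (μ i) ⊆ closedBall 0 1) ∧
  ∀ x : ι → Euc n, (∀ i, x i ∈ msupp (μ i)) →
    ∀ y : ι → Euc n, ¬ AffineIndependent ℝ y → 1 / C ≤ dist x y

/-- The measures `μ i`, `i : ι`, span `(σ, K, c)`-thin `(|ι| - 1)`-planes. -/
def SpansThin {n : ℕ} {ι : Type} [Fintype ι] (μ : ι → Measure (Euc n)) (σ K c : ℝ) : Prop :=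
  ∃ G : Set (ι → Euc n), MeasurableSet G ∧
    G ⊆ Set.univ.pi (fun i => msupp (μ i)) ∧
    ENNReal.ofReal c ≤ Measure.pi μ G ∧
    ∀ x ∈ G, ∀ δ : ℝ, 0 < δ → ∀ j : ι,
      μ j (thickening δ ((affineSpan ℝ (Set.range x) : AffineSubspace ℝ (Euc n)) : Set (Euc n))) ≤
        ENNReal.ofReal (K * δ ^ σ)

/-- A set `X ⊆ ℝⁿ` is non-concentrated (NC). -/
def NCSet {n : ℕ} (X : Set (Euc n)) : Prop :=
  ∀ (r : ℕ) (F : Fin r → AffineSubspace ℝ (Euc n)),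
    (∑ i, Module.finrank ℝ (F i).direction) + 1 ≤ n →
    dimH (X \ ⋃ i, (F i : Set (Euc n))) = dimH X

/-- A collection of affine flats is non-concentrated (NC). -/
def NCFlats {n m : ℕ} (V : Fin m → AffineSubspace ℝ (Euc n)) : Prop :=
  ∀ (r : ℕ) (F : Fin r → AffineSubspace ℝ (Euc n)),
    (⋃ j, (V j : Set (Euc n))) ⊆ (⋃ i, (F i : Set (Euc n))) →
    n ≤ ∑ i, Module.finrank ℝ (F i).direction

/-!
The support of `μ` is conull, so irreducibility forces its affine span to be all of `ℝⁿ`, and it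
contains `k + 1` affinely independent points. Affine independence is an open condition, so small
balls around these points are uniformly separated from the affinely dependent tuples, and they
have positive measure because their centres lie in the support. The normalized restrictions are
absolutely continuous with respect to `μ` and dominated by `μ(B)⁻¹ • μ`, which transfers
irreducibility and the Frostman bound.
-/

section AffineIndependence

variable {K V P : Type*} [DivisionRing K] [AddCommGroup V] [Module K V] [AddTorsor V P]
  [FiniteDimensional K V]

theorem exists_affineIndependent_fin_of_affineSpan_eq_top {s : Set P}
    (hs : affineSpan K s = ⊤) {m : ℕ} (hm : m ≤ Module.finrank K V) :
    ∃ p : Fin (m + 1) → P, AffineIndependent K p ∧ ∀ i, p i ∈ s := by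
  obtain ⟨t, hts, htspan, htind⟩ := exists_affineIndependent K V s
  have : Fintype t := (finite_set_of_fin_dim_affineIndependent K htind).fintype
  have htcard : Fintype.card t = Module.finrank K V + 1 :=
    htind.affineSpan_eq_top_iff_card_eq_finrank_add_one.mp (by rwa [Subtype.range_coe, htspan])
  let e : Fin (m + 1) ↪ t :=
    (Fin.castLEEmb (by omega)).trans (Fintype.equivFinOfCardEq htcard).symm.toEmbedding
  exact ⟨fun i => e i, htind.comp_embedding e, fun i => hts (e i).2⟩

end AffineIndependence

theorem AffineIndependent.exists_pos_le_dist_of_not_affineIndependent {ι E : Type*} [Fintype ι]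
    [NormedAddCommGroup E] [NormedSpace ℝ E] [FiniteDimensional ℝ E] {p : ι → E}
    (hp : AffineIndependent ℝ p) :
    ∃ ε > 0, ∀ x : ι → E, (∀ i, dist (x i) (p i) < ε) →
      ∀ y : ι → E, ¬ AffineIndependent ℝ y → ε ≤ dist x y := by
  obtain ⟨δ, hδ, hball⟩ := Metric.isOpen_iff.mp isOpen_setOfPred_affineIndependent p hp
  refine ⟨δ / 2, by positivity, fun x hx y hy => ?_⟩
  have hxp : dist x p < δ / 2 := (dist_pi_lt_iff (by positivity)).mpr hx
  by_contra! hxy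
  exact hy (hball (by rw [mem_ball]; linarith [dist_triangle_left y p x]))

theorem measure_ball_pos_of_mem_support {X : Type*} [PseudoMetricSpace X] [MeasurableSpace X]
    {μ : Measure X} {x : X} (hx : x ∈ μ.support) {r : ℝ} (hr : 0 < r) : 0 < μ (ball x r) :=
  nhds_basis_ball.mem_measureSupport.mp hx r hr

section Measures

variable {n : ℕ} {μ ν : Measure (Euc n)}

theorem Frostman.smul_restrict {C s : ℝ} (hF : Frostman μ C s) {c : ENNReal} (hc : c ≠ ⊤)
    (B : Set (Euc n)) : Frostman (c • μ.restrict B) (c.toReal * C) s := by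
  intro x r hr
  rw [mul_assoc, ENNReal.ofReal_mul ENNReal.toReal_nonneg, ENNReal.ofReal_toReal hc,
    Measure.smul_apply, smul_eq_mul]
  gcongr
  exact (Measure.restrict_le_self _).trans (hF x r hr)

theorem IrreducibleIn.of_absolutelyContinuous {V : AffineSubspace ℝ (Euc n)}
    (hμ : IrreducibleIn μ V) (hνμ : ν ≪ μ) : IrreducibleIn ν V :=
  fun V' hV' => hνμ (hμ V' hV')

theorem IrreducibleIn.affineSpan_support_eq_top (hμ : IrreducibleIn μ ⊤) (hμ0 : μ ≠ 0) :
    affineSpan ℝ μ.support = ⊤ := by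
  by_contra hne
  have hspan : μ (affineSpan ℝ μ.support : Set (Euc n)) = 0 := hμ _ (lt_top_iff_ne_top.mpr hne)
  refine hμ0 (Measure.measure_univ_eq_zero.mp (measure_mono_null ?_
    (measure_union_null hspan Measure.measure_compl_support)))
  intro x _
  by_cases hx : x ∈ μ.support
  exacts [Or.inl (subset_affineSpan ℝ _ hx), Or.inr hx]

end Measures

theorem stmt_4_general {n : ℕ} (s C : ℝ)
    (μ : Measure (Euc n)) [IsProbabilityMeasure μ]
    (hF : Frostman μ C s) (hirr : IrreducibleIn μ ⊤)
    (k : ℕ) (hkn : k ≤ n) :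
    ∃ A : ℝ, 1 ≤ A ∧ ∃ (ctr : Fin (k + 1) → Euc n) (rad : Fin (k + 1) → ℝ),
      (∀ i, 0 < rad i) ∧
      (∀ i, 0 < μ (ball (ctr i) (rad i))) ∧
      (∀ x : Fin (k + 1) → Euc n, (∀ i, x i ∈ ball (ctr i) (rad i)) →
        ∀ y : Fin (k + 1) → Euc n, ¬ AffineIndependent ℝ y → 1 / A ≤ dist x y) ∧
      (∀ i, IsProbabilityMeasure
          ((μ (ball (ctr i) (rad i)))⁻¹ • μ.restrict (ball (ctr i) (rad i))) ∧
        Frostman ((μ (ball (ctr i) (rad i)))⁻¹ • μ.restrict (ball (ctr i) (rad i)))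
          (C / (μ (ball (ctr i) (rad i))).toReal) s ∧
        IrreducibleIn ((μ (ball (ctr i) (rad i)))⁻¹ • μ.restrict (ball (ctr i) (rad i))) ⊤) := by
  obtain ⟨p, hp, hp_supp⟩ := exists_affineIndependent_fin_of_affineSpan_eq_top
    (hirr.affineSpan_support_eq_top (IsProbabilityMeasure.ne_zero μ))
    (hkn.trans_eq (finrank_euclideanSpace_fin).symm)
  obtain ⟨ε, hε, hsep⟩ := hp.exists_pos_le_dist_of_not_affineIndependent
  have hB_pos i : 0 < μ (ball (p i) ε) := measure_ball_pos_of_mem_support (hp_supp i) hε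
  refine ⟨max 1 ε⁻¹, le_max_left _ _, p, fun _ => ε, fun _ => hε, hB_pos,
    fun x hx y hy => ?_, fun i => ⟨ProbabilityTheory.cond_isProbabilityMeasure (hB_pos i).ne', ?_,
      hirr.of_absolutelyContinuous ProbabilityTheory.cond_absolutelyContinuous⟩⟩
  · calc 1 / max 1 ε⁻¹ ≤ 1 / ε⁻¹ := one_div_le_one_div_of_le (by positivity) (le_max_right _ _)
      _ = ε := by rw [one_div, inv_inv]
      _ ≤ dist x y := hsep x hx y hy
  · rw [div_eq_inv_mul, ← ENNReal.toReal_inv]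
    exact hF.smul_restrict (ENNReal.inv_ne_top.mpr (hB_pos i).ne') _

/-- Partitioning an irreducible measure. An irreducible `(C,s)`-Frostman
probability measure `μ` on `ℝⁿ` admits, for each `1 ≤ k ≤ n`, balls `B 0, …, B k` of positive
measure whose product is `1/A`-separated from the affinely dependent tuples; the normalized
restrictions are `(C / μ(B i), s)`-Frostman probability measures irreducible in `ℝⁿ`. -/
theorem stmt_4 {n : ℕ} (s C : ℝ) (hs : 0 < s) (hC : 0 < C)
    (μ : Measure (Euc n)) [IsProbabilityMeasure μ]
    (hF : Frostman μ C s) (hirr : IrreducibleIn μ ⊤)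
    (k : ℕ) (hk1 : 1 ≤ k) (hkn : k ≤ n) :
    ∃ A : ℝ, 1 ≤ A ∧ ∃ (ctr : Fin (k + 1) → Euc n) (rad : Fin (k + 1) → ℝ),
      (∀ i, 0 < rad i) ∧
      (∀ i, 0 < μ (ball (ctr i) (rad i))) ∧
      (∀ x : Fin (k + 1) → Euc n, (∀ i, x i ∈ ball (ctr i) (rad i)) →
        ∀ y : Fin (k + 1) → Euc n, ¬ AffineIndependent ℝ y → 1 / A ≤ dist x y) ∧
      (∀ i, IsProbabilityMeasure
          ((μ (ball (ctr i) (rad i)))⁻¹ • μ.restrict (ball (ctr i) (rad i))) ∧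
        Frostman ((μ (ball (ctr i) (rad i)))⁻¹ • μ.restrict (ball (ctr i) (rad i)))
          (C / (μ (ball (ctr i) (rad i))).toReal) s ∧
        IrreducibleIn ((μ (ball (ctr i) (rad i)))⁻¹ • μ.restrict (ball (ctr i) (rad i))) ⊤) :=
  stmt_4_general s C μ hF hirr k hkn
end
end

section
/- Let V ⊆ ℝ^n be an affine subspace and let μ be a finite Borel measure supported on V ∩ B(0,1) that is irreducible in V. Then for every τ > 0 there exists w = w(τ) > 0 such that μ is (w,τ)-irreducible in V, i.e. μ(H(w)) ≤ τ·μ(B(0,1)) for every proper affine subspace H ⊊ V, where H(w) is the open w-neighborhood of H. -/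
open MeasureTheory Metric Set

noncomputable section

/-! Every proper affine subspace `H < V` lies in a hyperplane `{x | ⟪u, x⟫ = c}` with `u` a unit
vector of `V.direction`, and the `w`-neighbourhood of such a hyperplane is the slab
`|⟪u, x⟫ - c| < w`. Irreducibility makes each hyperplane of `V` null, so thin slabs about it have
small mass; on the unit ball this bound persists for all nearby parameters `(u, c)`, and
compactness of the parameter set turns it into a single width `w` that works for every `H`. -/

open Filter Topology RealInnerProductSpace

theorem exists_pos_measure_preimage_ball_lt {X : Type*} [MeasurableSpace X] {μ : Measure X}
    [IsFiniteMeasure μ] {f : X → ℝ} (hf : Measurable f) {c : ℝ} (hc : μ (f ⁻¹' {c}) = 0)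
    {η : ENNReal} (hη : 0 < η) : ∃ ε > 0, μ (f ⁻¹' ball c ε) < η := by
  have hlim := tendsto_measure_thickening_of_isClosed (μ := μ.map f)
    ⟨1, one_pos, measure_ne_top _ _⟩ (isClosed_singleton (x := c))
  rw [Measure.map_apply hf (measurableSet_singleton c), hc] at hlim
  obtain ⟨ε, hεη, hε⟩ := ((hlim.eventually (gt_mem_nhds hη)).and self_mem_nhdsWithin).exists
  refine ⟨ε, hε, ?_⟩
  rwa [thickening_singleton, Measure.map_apply hf measurableSet_ball] at hεη

section InnerProductSpace

variable {E : Type*} [NormedAddCommGroup E] [InnerProductSpace ℝ E]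

def slab (u : E) (c δ : ℝ) : Set E := {x | |⟪u, x⟫ - c| < δ}

theorem thickening_subset_slab {u : E} (hu : ‖u‖ ≤ 1) (c δ : ℝ) :
    thickening δ {x | ⟪u, x⟫ = c} ⊆ slab u c δ := by
  intro x hx
  obtain ⟨y, hy, hxy⟩ := mem_thickening_iff.mp hx
  calc |⟪u, x⟫ - c| = |⟪u, x - y⟫| := by rw [inner_sub_right, hy]
    _ ≤ ‖u‖ * ‖x - y‖ := abs_real_inner_le_norm _ _
    _ ≤ dist x y := by rw [dist_eq_norm]; exact mul_le_of_le_one_left (norm_nonneg _) hu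
    _ < δ := hxy

theorem Submodule.exists_ne_zero_mem_orthogonal_of_lt {K L : Submodule ℝ E}
    [K.HasOrthogonalProjection] (h : K < L) : ∃ u ∈ L, u ∈ Kᗮ ∧ u ≠ 0 := by
  have hsup := Submodule.sup_orthogonal_inf_of_hasOrthogonalProjection h.le
  obtain ⟨u, hu, hu0⟩ := Submodule.exists_mem_ne_zero_of_ne_bot (p := Kᗮ ⊓ L) fun hbot => by
    rw [hbot, sup_bot_eq] at hsup
    exact h.ne hsup
  exact ⟨u, hu.2, hu.1, hu0⟩

theorem AffineSubspace.exists_subset_inner_eq_of_lt [FiniteDimensional ℝ E]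
    {H V : AffineSubspace ℝ E} (hHV : H < V) (hH : (H : Set E).Nonempty) :
    ∃ u ∈ sphere (0 : E) 1, u ∈ V.direction ∧ ∃ c, (H : Set E) ⊆ {x | ⟪u, x⟫ = c} := by
  obtain ⟨v, hvV, hvH, hv0⟩ := Submodule.exists_ne_zero_mem_orthogonal_of_lt
    (AffineSubspace.direction_lt_of_nonempty hHV hH)
  obtain ⟨q, hq⟩ := hH
  refine ⟨‖v‖⁻¹ • v, by simp [norm_smul, hv0], V.direction.smul_mem _ hvV, ⟪‖v‖⁻¹ • v, q⟫,
    fun x hx => ?_⟩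
  have hxq : ⟪‖v‖⁻¹ • v, x - q⟫ = 0 :=
    Submodule.inner_left_of_mem_orthogonal (H.vsub_mem_direction hx hq)
      (Submodule.smul_mem _ _ hvH)
  rwa [inner_sub_right, sub_eq_zero] at hxq

def innerHyperplane (u : E) (c : ℝ) : AffineSubspace ℝ E :=
  (affineSpan ℝ {c}).comap (innerₛₗ ℝ u).toAffineMap

theorem coe_innerHyperplane (u : E) (c : ℝ) :
    (innerHyperplane u c : Set E) = {x | ⟪u, x⟫ = c} := by
  ext x
  simp [innerHyperplane]

theorem innerHyperplane_inf_lt {V : AffineSubspace ℝ E} (hV : (V : Set E).Nonempty) {u : E}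
    (hu : u ∈ V.direction) (hu0 : u ≠ 0) (c : ℝ) : innerHyperplane u c ⊓ V < V := by
  refine lt_of_le_of_ne inf_le_right fun h => hu0 ?_
  obtain ⟨p, hp⟩ := hV
  have hmem : ∀ x ∈ V, ⟪u, x⟫ = c := fun x hx => by
    rw [← h] at hx
    simpa [← SetLike.mem_coe, coe_innerHyperplane] using hx.1
  have hpu := hmem _ (AffineSubspace.vadd_mem_of_mem_direction hu hp)
  rw [vadd_eq_add, inner_add_right, hmem p hp, add_eq_right] at hpu
  exact inner_self_eq_zero.mp hpu

theorem eventually_forall_measure_closedBall_inter_slab_lt [MeasurableSpace E] [BorelSpace E]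
    (μ : Measure E) [IsFiniteMeasure μ] {K : Set (E × ℝ)} (hK : IsCompact K)
    (hK0 : ∀ p ∈ K, μ {x | ⟪p.1, x⟫ = p.2} = 0) {η : ENNReal} (hη : 0 < η) :
    ∀ᶠ δ in 𝓝 (0 : ℝ), ∀ p ∈ K, μ (closedBall 0 1 ∩ slab p.1 p.2 δ) < η := by
  refine hK.eventually_forall_of_forall_eventually fun ⟨a, c₀⟩ hp => ?_
  obtain ⟨ε, hε, hμε⟩ := exists_pos_measure_preimage_ball_lt
    (continuous_const.inner continuous_id).measurable (hK0 _ hp) hη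
  -- On the unit ball, `slab u c δ` lies in the slab about `(a, c₀)` of width
  -- `|δ| + ‖u - a‖ + |c - c₀|`.
  have hnear : ∀ᶠ z : ℝ × E × ℝ in 𝓝 (0, a, c₀), |z.1| + ‖z.2.1 - a‖ + |z.2.2 - c₀| < ε :=
    ContinuousAt.eventually_lt (by fun_prop) continuousAt_const (by simpa using hε)
  filter_upwards [hnear] with ⟨δ, u, c⟩ hz
  refine lt_of_le_of_lt (measure_mono fun x ⟨hxB, hx⟩ => ?_) hμε
  have hx1 : ‖x‖ ≤ 1 := mem_closedBall_zero_iff.mp hxB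
  have hua : |⟪a - u, x⟫| ≤ ‖u - a‖ :=
    (abs_real_inner_le_norm _ _).trans <| by
      rw [norm_sub_rev]; exact mul_le_of_le_one_right (norm_nonneg _) hx1
  change |⟪a, x⟫ - c₀| < ε
  have hsplit : ⟪a, x⟫ - c₀ = (⟪u, x⟫ - c) + ⟪a - u, x⟫ + (c - c₀) := by
    rw [inner_sub_left]; ring
  have hδ : |⟪u, x⟫ - c| < |δ| := lt_of_lt_of_le hx (le_abs_self δ)
  rw [hsplit]
  calc _ ≤ |⟪u, x⟫ - c| + |⟪a - u, x⟫| + |c - c₀| := abs_add_three _ _ _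
    _ < ε := by simp only at hz; linarith

theorem abs_lt_of_mem_closedBall_inter_slab {u x : E} {c δ : ℝ} (hu : ‖u‖ ≤ 1)
    (hx : x ∈ closedBall 0 1 ∩ slab u c δ) : |c| < 1 + δ := by
  have hux : |⟪u, x⟫| ≤ 1 := (abs_real_inner_le_norm u x).trans <|
    mul_le_one₀ hu (norm_nonneg x) (mem_closedBall_zero_iff.mp hx.1)
  have hc := abs_sub (⟪u, x⟫) (⟪u, x⟫ - c)
  rw [sub_sub_cancel] at hc
  linarith [show |⟪u, x⟫ - c| < δ from hx.2]

end InnerProductSpace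

theorem IrreducibleIn.measure_inner_eq_eq_zero {n : ℕ} {μ : Measure (Euc n)}
    {V : AffineSubspace ℝ (Euc n)} (hirr : IrreducibleIn μ V) (hV : μ (V : Set (Euc n))ᶜ = 0)
    {u : Euc n} (hu : u ∈ V.direction) (hu0 : u ≠ 0) (c : ℝ) : μ {x | ⟪u, x⟫ = c} = 0 := by
  rw [← measure_inter_conull hV, ← coe_innerHyperplane, ← AffineSubspace.coe_inf]
  rcases (V : Set (Euc n)).eq_empty_or_nonempty with hVe | hVne
  · rw [AffineSubspace.coe_inf, hVe, inter_empty, measure_empty]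
  · exact hirr _ (innerHyperplane_inf_lt hVne hu hu0 c)

theorem IrreducibleIn.exists_pos_forall_measure_thickening_lt {n : ℕ} {μ : Measure (Euc n)}
    [IsFiniteMeasure μ] {V : AffineSubspace ℝ (Euc n)} (hirr : IrreducibleIn μ V)
    (hsupp : μ (((V : Set (Euc n)) ∩ closedBall 0 1)ᶜ) = 0) {η : ENNReal} (hη : 0 < η) :
    ∃ w > 0, ∀ H < V, μ (thickening w (H : Set (Euc n))) < η := by
  have hV : μ (V : Set (Euc n))ᶜ = 0 :=
    measure_mono_null (compl_subset_compl.mpr inter_subset_left) hsupp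
  have hB : μ (closedBall (0 : Euc n) 1)ᶜ = 0 :=
    measure_mono_null (compl_subset_compl.mpr inter_subset_right) hsupp
  -- `|c| ≤ 2` suffices: a slab of width `< 1` with `|c| > 2` misses the unit ball.
  set K := (sphere (0 : Euc n) 1 ∩ V.direction) ×ˢ Icc (-2 : ℝ) 2
  have hK : IsCompact K :=
    ((isCompact_sphere 0 1).inter_right V.direction.closed_of_finiteDimensional).prod
      isCompact_Icc
  have hK0 : ∀ p ∈ K, μ {x | ⟪p.1, x⟫ = p.2} = 0 := fun p hp =>
    hirr.measure_inner_eq_eq_zero hV hp.1.2 (ne_zero_of_mem_unit_sphere ⟨p.1, hp.1.1⟩) p.2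
  obtain ⟨w, hwK, hw⟩ := (((eventually_forall_measure_closedBall_inter_slab_lt μ hK hK0
    hη).filter_mono nhdsWithin_le_nhds).and (Ioo_mem_nhdsGT one_pos)).exists
  refine ⟨w, hw.1, fun H hHV => ?_⟩
  rcases (H : Set (Euc n)).eq_empty_or_nonempty with hH | hH
  · rwa [hH, thickening_empty, measure_empty]
  obtain ⟨u, hu1, huV, c, hHc⟩ := AffineSubspace.exists_subset_inner_eq_of_lt hHV hH
  have hu : ‖u‖ ≤ 1 := (mem_sphere_zero_iff_norm.mp hu1).le
  have hslab : thickening w (H : Set (Euc n)) ⊆ slab u c w :=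
    (thickening_subset_of_subset w hHc).trans (thickening_subset_slab hu c w)
  calc μ (thickening w (H : Set (Euc n)))
      = μ (closedBall 0 1 ∩ thickening w (H : Set (Euc n))) := by
        rw [inter_comm, measure_inter_conull hB]
    _ ≤ μ (closedBall 0 1 ∩ slab u c w) := measure_mono (inter_subset_inter_right _ hslab)
    _ < η := ?_
  rcases (closedBall (0 : Euc n) 1 ∩ slab u c w).eq_empty_or_nonempty with he | ⟨x, hx⟩
  · rwa [he, measure_empty]
  have hc := abs_lt_of_mem_closedBall_inter_slab hu hx
  exact hwK (u, c) ⟨⟨hu1, huV⟩, abs_le.mp (by linarith [hw.2])⟩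

/-- Modulus of irreducibility. A finite measure supported on `V ∩ B(0,1)`
which is irreducible in `V` is `(w, τ)`-irreducible in `V` for every `τ > 0` and some
`w = w(τ) > 0`. -/
theorem stmt_5 {n : ℕ} (V : AffineSubspace ℝ (Euc n)) (μ : Measure (Euc n))
    [IsFiniteMeasure μ]
    (hsupp : μ (((V : Set (Euc n)) ∩ closedBall 0 1)ᶜ) = 0)
    (hirr : IrreducibleIn μ V) (τ : ℝ) (hτ : 0 < τ) :
    ∃ w : ℝ, 0 < w ∧ WTIrreducible μ V w τ := by
  by_cases hB : μ (closedBall (0 : Euc n) 1) = 0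
  · have hμ : μ univ = 0 := by
      rw [← measure_inter_conull hsupp, univ_inter]
      exact measure_mono_null inter_subset_right hB
    exact ⟨1, one_pos, fun H _ => (measure_mono_null (subset_univ _) hμ).trans_le zero_le⟩
  obtain ⟨w, hw, hwH⟩ := hirr.exists_pos_forall_measure_thickening_lt hsupp
    (ENNReal.mul_pos (ENNReal.ofReal_pos.mpr hτ).ne' hB)
  exact ⟨w, hw, fun H hHV => (hwH H hHV).le⟩
end
end

section
/- Let V_1,…,V_m ⊆ ℝ^n be affine flats with n_j = dim V_j ≥ 1, fix an orthonormal basis of the linearization of each V_j, and for each j ∈ [m] and i ∈ [n_j] let μ_{j,i} be a nonzero measure on V_j ∩ B(0,1) that is irreducible in V_j. Then there exist c > 0 and open balls B_{j,i} ⊆ ℝ^n with μ_{j,i}(B_{j,i}) > 0 such that for each j the product B_{j,1} × ⋯ × B_{j,n_j} is at distance at least c from the set of affinely dependent n_j-tuples in (ℝ^n)^{n_j}, and the collection of restricted measures (μ_{j,i}|_{B_{j,i}} : j ∈ [m], i ∈ [n_j]) is in c-stable position with respect to V_1,…,V_m. -/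
open MeasureTheory Metric Set

noncomputable section

open Matrix in
/-- The lift `x ↦ (x, 1) ∈ ℝ^{n+1}` of a point of `ℝⁿ`. -/
def liftPt {n : ℕ} (x : Euc n) : Fin (n + 1) → ℝ := Fin.snoc (fun i => x i) 1

/-- `M_r(M) ≥ c`: some `r × r` minor of `M` has absolute value at least `c`. -/
def MrGe {N : ℕ} {ι : Type} (M : Matrix (Fin N) ι ℝ) (r : ℕ) (c : ℝ) : Prop :=
  ∃ (ρ : Fin r → Fin N) (γ : Fin r → ι),
    Function.Injective ρ ∧ Function.Injective γ ∧ c ≤ |(M.submatrix ρ γ).det|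

/-- The matrix `(B_Ī(x̄), A_J)`: the columns are the lifted points `(x_{j,i}, 1)` for
`(j,i) ∈ Ī` together with the columns of the matrices `A j` for `j ∈ J`. -/
def BA {n m : ℕ} (nvec : Fin m → ℕ)
    (A : ∀ j, Matrix (Fin (n + 1)) (Fin (nvec j + 1)) ℝ)
    (Ibar : Finset (Σ j : Fin m, Fin (nvec j))) (J : Finset (Fin m))
    (x : (Σ j : Fin m, Fin (nvec j)) → Euc n) :
    Matrix (Fin (n + 1)) ({p // p ∈ Ibar} ⊕ Σ j : {j : Fin m // j ∈ J}, Fin (nvec j.1 + 1)) ℝ :=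
  Matrix.of fun r => Sum.elim (fun p => liftPt (x p.1) r) (fun q => A q.1.1 r q.2)

/-- A collection of measures, encoded via their supports `supp (j, i) ⊆ V j`, is in `c`-stable
position with respect to the flats `V j` (whose linearizations have orthonormal bases given by
the columns of the matrices `A j`). -/
def CStable {n m : ℕ} (nvec : Fin m → ℕ)
    (A : ∀ j, Matrix (Fin (n + 1)) (Fin (nvec j + 1)) ℝ)
    (supp : (Σ j : Fin m, Fin (nvec j)) → Set (Euc n)) (c : ℝ) : Prop :=
  ∀ (Ibar : Finset (Σ j : Fin m, Fin (nvec j))) (J : Finset (Fin m)),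
    ∃ r : ℕ, ∀ x : (Σ j : Fin m, Fin (nvec j)) → Euc n, (∀ p, x p ∈ supp p) →
      (BA nvec A Ibar J x).rank = r ∧ MrGe (BA nvec A Ibar J x) r c

/-!
For each pair `(Ī, J)` let `r` be the largest rank of `(B_Ī(x̄), A_J)` over `x̄` in the product
of the supports, and fix an `r × r` minor that is nonzero at some such `x̄`. A minor is affine in
each point `x_{j,i}` separately, so once it is nonzero somewhere on `V_j` its zero set in `V_j` is
a proper affine subspace, hence `μ_{j,i}`-null by irreducibility. Fixing the points one at a time
therefore gives one `x̄` in the product of the supports at which all the (finitely many) chosen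
minors are nonzero; by continuity they stay at least `c` in absolute value near `x̄`, so on small
balls around `x̄` the rank is exactly `r` and `M_r ≥ c`. Separation from affinely dependent tuples
is the case `Ī = {j} × [n_j]`, `J = ∅`, where `r = n_j` because the supports of irreducible
measures on `V_j` contain affinely independent `n_j`-tuples.
-/

open Filter Topology Function

section Support

variable {n : ℕ}

lemma msupp_eq_support (μ : Measure (Euc n)) : msupp μ = μ.support :=
  Set.ext fun _ => nhds_basis_ball.mem_measureSupport.symm

lemma ae_mem_msupp (μ : Measure (Euc n)) : ∀ᵐ z ∂μ, z ∈ msupp μ := by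
  rw [msupp_eq_support]
  exact Measure.support_mem_ae

lemma msupp_nonempty {μ : Measure (Euc n)} (hμ : μ ≠ 0) : (msupp μ).Nonempty := by
  rw [msupp_eq_support]
  exact Measure.nonempty_support hμ

lemma exists_mem_msupp_of_ae {μ : Measure (Euc n)} (hμ : μ ≠ 0) {P : Euc n → Prop}
    (h : ∀ᵐ z ∂μ, P z) : ∃ z ∈ msupp μ, P z :=
  haveI := ae_neBot.2 hμ
  ((ae_mem_msupp μ).and h).exists

lemma msupp_subset_of_ae {μ : Measure (Euc n)} {s : Set (Euc n)} (hs : IsClosed s)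
    (h : ∀ᵐ z ∂μ, z ∈ s) : msupp μ ⊆ s := by
  rw [msupp_eq_support]
  exact Measure.support_subset_of_isClosed hs h

lemma msupp_restrict_ball_subset (μ : Measure (Euc n)) (x : Euc n) (r : ℝ) :
    msupp (μ.restrict (ball x r)) ⊆ closedBall x r ∩ msupp μ := by
  rw [msupp_eq_support, msupp_eq_support]
  exact Measure.support_restrict_subset.trans
    (inter_subset_inter_left _ closure_ball_subset_closedBall)

end Support

section Irreducible

variable {n : ℕ} {μ : Measure (Euc n)} {V : AffineSubspace ℝ (Euc n)}

lemma IrreducibleIn.ae_ne_zero (hirr : IrreducibleIn μ V) (hV : ∀ᵐ z ∂μ, z ∈ V)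
    (f : Euc n →ᵃ[ℝ] ℝ) {z₀ : Euc n} (hz₀ : z₀ ∈ V) (hf : f z₀ ≠ 0) : ∀ᵐ z ∂μ, f z ≠ 0 := by
  let H := V ⊓ (affineSpan ℝ {(0 : ℝ)}).comap f
  have hH : H < V := inf_le_left.lt_of_ne fun (h : H = V) => hf <| by
    have hz₀H : z₀ ∈ H := by rw [h]; exact hz₀
    simpa using ((AffineSubspace.mem_inf_iff _ _ _).1 hz₀H).2
  filter_upwards [hV, measure_eq_zero_iff_ae_notMem.1 (hirr H hH)] with z hzV hzH hfz
  exact hzH ((AffineSubspace.mem_inf_iff _ _ _).2 ⟨hzV, by simp [hfz]⟩)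

lemma IrreducibleIn.exists_mem_msupp_forall_ne_zero (hirr : IrreducibleIn μ V) (hμ : μ ≠ 0)
    (hV : msupp μ ⊆ V) {T : Type*} [Countable T] (f : T → Euc n →ᵃ[ℝ] ℝ)
    (hf : ∀ t, ∃ z ∈ msupp μ, f t z ≠ 0) : ∃ z ∈ msupp μ, ∀ t, f t z ≠ 0 := by
  refine exists_mem_msupp_of_ae hμ (ae_all_iff.2 fun t => ?_)
  obtain ⟨z₀, hz₀, hfz₀⟩ := hf t
  exact hirr.ae_ne_zero ((ae_mem_msupp μ).mono hV) (f t) (hV hz₀) hfz₀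

end Irreducible

def IsSeparatelyAffine {ι E : Type*} [DecidableEq ι] [AddCommGroup E] [Module ℝ E]
    (P : (ι → E) → ℝ) : Prop :=
  ∀ (x : ι → E) (p : ι), ∃ f : E →ᵃ[ℝ] ℝ, ∀ z, P (update x p z) = f z

theorem exists_mem_pi_msupp_forall_ne_zero {n : ℕ} {ι T : Type*} [Fintype ι] [DecidableEq ι]
    [Countable T] {V : ι → AffineSubspace ℝ (Euc n)} {μ : ι → Measure (Euc n)}
    (hμ : ∀ p, μ p ≠ 0) (hV : ∀ p, msupp (μ p) ⊆ V p) (hirr : ∀ p, IrreducibleIn (μ p) (V p))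
    {P : T → (ι → Euc n) → ℝ} (hP : ∀ t, IsSeparatelyAffine (P t))
    (hw : ∀ t, ∃ x ∈ univ.pi fun p => msupp (μ p), P t x ≠ 0) :
    ∃ x ∈ univ.pi fun p => msupp (μ p), ∀ t, P t x ≠ 0 := by
  set S := univ.pi fun p => msupp (μ p)
  -- The coordinates are fixed one at a time; while those in `s` are still free, each `P t` has
  -- a witness in `S` agreeing with the current point off `s`.
  suffices key : ∀ s : Finset ι, (∃ x ∈ S, ∀ t, ∃ y ∈ S, (∀ p ∉ s, y p = x p) ∧ P t y ≠ 0) →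
      ∃ x ∈ S, ∀ t, P t x ≠ 0 by
    obtain ⟨x₀, hx₀⟩ : S.Nonempty := univ_pi_nonempty_iff.2 fun p => msupp_nonempty (hμ p)
    refine key Finset.univ ⟨x₀, hx₀, fun t => ?_⟩
    obtain ⟨y, hyS, hy⟩ := hw t
    exact ⟨y, hyS, fun p hp => absurd (Finset.mem_univ p) hp, hy⟩
  intro s
  induction s using Finset.induction_on with
  | empty =>
    rintro ⟨x, hxS, hx⟩
    refine ⟨x, hxS, fun t => ?_⟩
    obtain ⟨y, -, hyx, hy⟩ := hx t
    rwa [← funext fun p => hyx p (Finset.notMem_empty p)]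
  | insert p s hps IH =>
    rintro ⟨x, hxS, hx⟩
    choose y hyS hyx hy using hx
    choose f hf using fun t => hP t (y t) p
    obtain ⟨z, hz, hfz⟩ := (hirr p).exists_mem_msupp_forall_ne_zero (hμ p) (hV p) f
      fun t => ⟨y t p, hyS t p trivial, by rw [← hf, update_eq_self]; exact hy t⟩
    have hupdate : ∀ w ∈ S, update w p z ∈ S := fun w hw q _ => by
      rcases eq_or_ne q p with rfl | hq
      · simpa using hz
      · simpa [hq] using hw q trivial
    refine IH ⟨update x p z, hupdate x hxS, fun t => ⟨update (y t) p z, hupdate _ (hyS t),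
      fun q hq => ?_, by rw [hf]; exact hfz t⟩⟩
    rcases eq_or_ne q p with rfl | hqp
    · simp
    · simp [hqp, hyx t q (by simp [hqp, hq])]

lemma exists_pos_eventually_forall_le_abs {X T : Type*} [TopologicalSpace X] [Finite T]
    {f : T → X → ℝ} {x₀ : X} (hf : ∀ t, ContinuousAt (f t) x₀) (h : ∀ t, f t x₀ ≠ 0) :
    ∃ c > 0, ∀ᶠ x in 𝓝 x₀, ∀ t, c ≤ |f t x| := by
  obtain ⟨c, hlt, hc⟩ : ∃ c, (∀ t, c < |f t x₀|) ∧ 0 < c :=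
    ((eventually_all.2 fun t => nhdsWithin_le_nhds (eventually_lt_nhds (abs_pos.2 (h t)))).and
      (self_mem_nhdsWithin : ∀ᶠ c in 𝓝[>] (0 : ℝ), 0 < c)).exists
  exact ⟨c, hc, eventually_all.2 fun t =>
    (continuousAt_const.eventually_lt (hf t).abs (hlt t)).mono fun _ => le_of_lt⟩

section Minors

open Matrix

variable {N r : ℕ} {κ : Type} {M : Matrix (Fin N) κ ℝ} {c : ℝ}

lemma MrGe.mono {c' : ℝ} (h : MrGe M r c) (hc : c' ≤ c) : MrGe M r c' :=
  let ⟨ρ, γ, hρ, hγ, hle⟩ := h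
  ⟨ρ, γ, hρ, hγ, hc.trans hle⟩

lemma MrGe.le_rank [Fintype κ] (h : MrGe M r c) (hc : 0 < c) : r ≤ M.rank := by
  obtain ⟨ρ, γ, -, -, hle⟩ := h
  have hdet : (M.submatrix ρ γ).det ≠ 0 := fun h0 => by
    rw [h0, abs_zero] at hle
    exact hle.not_gt hc
  simpa [Matrix.rank_of_det_ne_zero hdet] using M.rank_submatrix_le ρ γ

lemma exists_injective_linearIndependent_comp {ι V : Type*} [Finite ι] [AddCommGroup V]
    [Module ℝ V] (v : ι → V) (h : r ≤ Module.finrank ℝ (Submodule.span ℝ (range v))) :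
    ∃ γ : Fin r → ι, Injective γ ∧ LinearIndependent ℝ (v ∘ γ) := by
  obtain ⟨ι', a, ha, hspan, hli⟩ := exists_linearIndependent' ℝ v
  have : Finite ι' := Finite.of_injective a ha
  have : Fintype ι' := Fintype.ofFinite ι'
  have hcard : r ≤ Fintype.card ι' := by
    rwa [linearIndependent_iff_card_eq_finrank_span.1 hli, Set.finrank, hspan]
  obtain ⟨e⟩ : Nonempty (Fin r ↪ ι') :=
    Function.Embedding.nonempty_of_card_le (by simpa using hcard)
  exact ⟨a ∘ e, ha.comp e.injective, hli.comp e e.injective⟩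

lemma exists_det_submatrix_ne_zero_of_le_rank [Fintype κ] (h : r ≤ M.rank) :
    ∃ (ρ : Fin r → Fin N) (γ : Fin r → κ), Injective ρ ∧ Injective γ ∧
      (M.submatrix ρ γ).det ≠ 0 := by
  rw [M.rank_eq_finrank_span_cols] at h
  obtain ⟨γ, hγ, hcols⟩ := exists_injective_linearIndependent_comp M.col h
  set C := M.submatrix id γ
  have hC : r ≤ Module.finrank ℝ (Submodule.span ℝ (range C.row)) := by
    rw [← C.rank_eq_finrank_span_row, ← C.rank_transpose,
      LinearIndependent.rank_matrix (M := Cᵀ) hcols, Fintype.card_fin]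
  obtain ⟨ρ, hρ, hrows⟩ := exists_injective_linearIndependent_comp C.row hC
  refine ⟨ρ, γ, hρ, hγ, ?_⟩
  have hunit : IsUnit (C.submatrix ρ id) := Matrix.linearIndependent_rows_iff_isUnit.1 hrows
  exact ((Matrix.isUnit_iff_isUnit_det _).1 hunit).ne_zero

lemma exists_maxRank_det_submatrix_ne_zero [Fintype κ] {X : Type*} (F : X → Matrix (Fin N) κ ℝ)
    {S : Set X} (hS : S.Nonempty) : ∃ r, (∀ x ∈ S, (F x).rank ≤ r) ∧ ∃ x ∈ S,
      ∃ (ρ : Fin r → Fin N) (γ : Fin r → κ), Injective ρ ∧ Injective γ ∧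
        ((F x).submatrix ρ γ).det ≠ 0 := by
  have hfin : ((fun x => (F x).rank) '' S).Finite := (finite_Iic N).subset <| by
    rintro _ ⟨x, -, rfl⟩
    simpa using (F x).rank_le_card_height
  obtain ⟨_, ⟨x, hx, rfl⟩, hmax⟩ := Set.exists_max_image _ id hfin (hS.image _)
  exact ⟨(F x).rank, fun y hy => hmax _ (mem_image_of_mem _ hy), x, hx,
    exists_det_submatrix_ne_zero_of_le_rank le_rfl⟩

end Minors

theorem exists_maxRank_minors_bounded_below_near {n N : ℕ} {ι T : Type*} [Fintype ι]
    [DecidableEq ι] [Finite T] {κ : T → Type} [∀ t, Fintype (κ t)]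
    {V : ι → AffineSubspace ℝ (Euc n)} {μ : ι → Measure (Euc n)}
    (hμ : ∀ p, μ p ≠ 0) (hV : ∀ p, msupp (μ p) ⊆ V p) (hirr : ∀ p, IrreducibleIn (μ p) (V p))
    (M : ∀ t, (ι → Euc n) → Matrix (Fin N) (κ t) ℝ)
    (haff : ∀ t r (ρ : Fin r → Fin N) (γ : Fin r → κ t), Injective γ →
      IsSeparatelyAffine fun x => ((M t x).submatrix ρ γ).det)
    (hcont : ∀ t, Continuous (M t)) :
    ∃ r : T → ℕ, (∀ t, ∀ x ∈ univ.pi fun p => msupp (μ p), (M t x).rank ≤ r t) ∧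
      ∃ xg ∈ univ.pi fun p => msupp (μ p), ∃ c > 0, ∀ᶠ x in 𝓝 xg, ∀ t, MrGe (M t x) (r t) c := by
  have hS : (univ.pi fun p => msupp (μ p)).Nonempty :=
    univ_pi_nonempty_iff.2 fun p => msupp_nonempty (hμ p)
  choose r hr xw hxw ρ γ hρ hγ hdet using fun t => exists_maxRank_det_submatrix_ne_zero (M t) hS
  obtain ⟨xg, hxg, hP⟩ := exists_mem_pi_msupp_forall_ne_zero hμ hV hirr
    (fun t => haff t _ (ρ t) (γ t) (hγ t)) fun t => ⟨xw t, hxw t, hdet t⟩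
  obtain ⟨c, hc, hnear⟩ := exists_pos_eventually_forall_le_abs
    (fun t => ((hcont t).matrix_submatrix (ρ t) (γ t)).matrix_det.continuousAt) hP
  exact ⟨r, hr, xg, hxg, c, hc, hnear.mono fun x hx t => ⟨ρ t, γ t, hρ t, hγ t, hx t⟩⟩

section Lift

variable {n : ℕ}

@[simp] lemma liftPt_last (x : Euc n) : liftPt x (Fin.last n) = 1 := by
  simp [liftPt]

@[simp] lemma liftPt_castSucc (x : Euc n) (k : Fin n) : liftPt x k.castSucc = x k := by
  simp [liftPt]

lemma sum_smul_liftPt_last {ι : Type*} (s : Finset ι) (w : ι → ℝ) (p : ι → Euc n) :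
    (∑ i ∈ s, w i • liftPt (p i)) (Fin.last n) = ∑ i ∈ s, w i := by
  simp [Finset.sum_apply]

lemma sum_smul_liftPt_castSucc {ι : Type*} (s : Finset ι) (w : ι → ℝ) (p : ι → Euc n)
    (k : Fin n) : (∑ i ∈ s, w i • liftPt (p i)) k.castSucc = (∑ i ∈ s, w i • p i) k := by
  simp [Finset.sum_apply]

lemma linearIndependent_liftPt_iff {ι : Type*} [Fintype ι] {p : ι → Euc n} :
    LinearIndependent ℝ (fun i => liftPt (p i)) ↔ AffineIndependent ℝ p := by
  rw [Fintype.linearIndependent_iff, affineIndependent_iff_of_fintype]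
  refine forall_congr' fun w => ⟨fun h hw hp => h ?_, fun h hlin => ?_⟩
  · rw [Finset.weightedVSub_eq_linear_combination _ hw] at hp
    funext k
    induction k using Fin.lastCases with
    | last => simpa [sum_smul_liftPt_last] using hw
    | cast k => rw [sum_smul_liftPt_castSucc, hp]; rfl
  · have hw : ∑ i, w i = 0 := by simpa [sum_smul_liftPt_last] using congrFun hlin (Fin.last n)
    refine h hw ?_
    rw [Finset.weightedVSub_eq_linear_combination _ hw]
    refine PiLp.ext fun k => ?_
    rw [← sum_smul_liftPt_castSucc, hlin]
    rfl

lemma mem_affineSpan_of_liftPt_mem_span {ι : Type*} [Fintype ι] {p : ι → Euc n} {z : Euc n}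
    (h : liftPt z ∈ Submodule.span ℝ (range fun i => liftPt (p i))) :
    z ∈ affineSpan ℝ (range p) := by
  obtain ⟨w, hw⟩ := (Submodule.mem_span_range_iff_exists_fun ℝ).1 h
  have hw1 : ∑ i, w i = 1 := by simpa [sum_smul_liftPt_last] using congrFun hw (Fin.last n)
  have hz : z = ∑ i, w i • p i := PiLp.ext fun k => by
    rw [← sum_smul_liftPt_castSucc, hw, liftPt_castSucc]
  rw [hz, ← Finset.univ.affineCombination_eq_linear_combination p w hw1]
  exact affineCombination_mem_affineSpan hw1 p

end Lift

theorem exists_affineIndependent_mem_msupp {n : ℕ} {V : AffineSubspace ℝ (Euc n)} {k : ℕ}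
    (μ : Fin k → Measure (Euc n)) (hk : k ≤ Module.finrank ℝ V.direction)
    (hμ : ∀ i, μ i ≠ 0) (hV : ∀ i, msupp (μ i) ⊆ V) (hirr : ∀ i, IrreducibleIn (μ i) V) :
    ∃ y : Fin k → Euc n, (∀ i, y i ∈ msupp (μ i)) ∧ AffineIndependent ℝ y := by
  induction k with
  | zero => exact ⟨Fin.elim0, fun i => i.elim0, affineIndependent_of_subsingleton ℝ _⟩
  | succ k IH =>
    obtain ⟨y, hy, hyA⟩ := IH (fun i => μ i.castSucc) (by omega) (fun i => hμ _)
      (fun i => hV _) (fun i => hirr _)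
    set W := affineSpan ℝ (range y)
    have hdim : Module.finrank ℝ W.direction < k + 1 := by
      rw [direction_affineSpan]
      rcases k with _ | k
      · simp
      · exact (finrank_vectorSpan_range_le ℝ y (Fintype.card_fin _)).trans_lt (by omega)
    have hWV : W < V := (affineSpan_le.2 (range_subset_iff.2 fun i => hV _ (hy i))).lt_of_ne
      fun (h : W = V) => by rw [h] at hdim; omega
    obtain ⟨z, hz, hzW⟩ := exists_mem_msupp_of_ae (hμ (Fin.last k))
      (measure_eq_zero_iff_ae_notMem.1 (hirr (Fin.last k) W hWV))
    refine ⟨Fin.snoc y z, fun i => ?_, ?_⟩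
    · induction i using Fin.lastCases with
      | last => simpa using hz
      | cast i => simpa using hy i
    · rw [← linearIndependent_liftPt_iff, ← Function.comp_def, Fin.comp_snoc,
        linearIndependent_finSnoc]
      exact ⟨linearIndependent_liftPt_iff.2 hyA,
        fun h => hzW (mem_affineSpan_of_liftPt_mem_span h)⟩

def liftPtAffine (n : ℕ) : Euc n →ᵃ[ℝ] (Fin (n + 1) → ℝ) :=
  AffineMap.pi fun k => Fin.lastCases (AffineMap.const ℝ (Euc n) (1 : ℝ))
    (fun i => (EuclideanSpace.proj i : Euc n →L[ℝ] ℝ).toLinearMap.toAffineMap) k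

@[simp] lemma liftPtAffine_apply {n : ℕ} (x : Euc n) : liftPtAffine n x = liftPt x := by
  funext k
  induction k using Fin.lastCases <;> simp [liftPtAffine]

lemma det_updateCol_comp_affine {E : Type*} [AddCommGroup E] [Module ℝ E] {r : ℕ}
    (M : Matrix (Fin r) (Fin r) ℝ) (j : Fin r) (v : E →ᵃ[ℝ] (Fin r → ℝ)) :
    ∃ f : E →ᵃ[ℝ] ℝ, ∀ z, (M.updateCol j (v z)).det = f z :=
  let detCol : (Fin r → ℝ) →ₗ[ℝ] ℝ :=
    { toFun := fun u => (M.updateCol j u).det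
      map_add' := M.det_updateCol_add j
      map_smul' := M.det_updateCol_smul j }
  ⟨detCol.toAffineMap.comp v, fun _ => rfl⟩

section Blocks

variable {m : ℕ} {nvec : Fin m → ℕ} {E : Type*}

def updateBlock (x : (Σ j : Fin m, Fin (nvec j)) → E) (j : Fin m) (y : Fin (nvec j) → E) :
    (Σ j : Fin m, Fin (nvec j)) → E :=
  Sigma.uncurry (γ := fun _ _ => E) (update (Sigma.curry x) j y)

@[simp] lemma updateBlock_self (x : (Σ j : Fin m, Fin (nvec j)) → E) (j : Fin m)
    (y : Fin (nvec j) → E) (i : Fin (nvec j)) : updateBlock x j y ⟨j, i⟩ = y i := by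
  simp [updateBlock, Sigma.uncurry]

lemma updateBlock_of_ne (x : (Σ j : Fin m, Fin (nvec j)) → E) {j j' : Fin m}
    (y : Fin (nvec j) → E) (h : j' ≠ j) (i : Fin (nvec j')) :
    updateBlock x j y ⟨j', i⟩ = x ⟨j', i⟩ := by
  simp [updateBlock, Sigma.uncurry, h, Sigma.curry]

end Blocks

section BA

open Matrix

variable {n m : ℕ} (nvec : Fin m → ℕ) (A : ∀ j, Matrix (Fin (n + 1)) (Fin (nvec j + 1)) ℝ)
  (Ibar : Finset (Σ j : Fin m, Fin (nvec j))) (J : Finset (Fin m))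

lemma continuous_BA : Continuous (BA nvec A Ibar J) := by
  have hlift : Continuous (liftPt (n := n)) := by
    simpa only [← funext liftPtAffine_apply] using (liftPtAffine n).continuous_of_finiteDimensional
  refine continuous_matrix fun k c => ?_
  rcases c with q | q
  · exact (continuous_apply k).comp (hlift.comp (continuous_apply q.1))
  · exact continuous_const

lemma BA_update_apply_of_ne {x : (Σ j : Fin m, Fin (nvec j)) → Euc n}
    {p : Σ j : Fin m, Fin (nvec j)} {z : Euc n} (k : Fin (n + 1))
    {c : {p // p ∈ Ibar} ⊕ Σ j : {j : Fin m // j ∈ J}, Fin (nvec j.1 + 1)}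
    (hc : ∀ q, c = Sum.inl q → q.1 ≠ p) :
    BA nvec A Ibar J (update x p z) k c = BA nvec A Ibar J x k c := by
  rcases c with q | q
  · simp [BA, update_of_ne (hc q rfl)]
  · rfl

lemma isSeparatelyAffine_det_submatrix_BA {r : ℕ} (ρ : Fin r → Fin (n + 1))
    (γ : Fin r → {p // p ∈ Ibar} ⊕ Σ j : {j : Fin m // j ∈ J}, Fin (nvec j.1 + 1))
    (hγ : Injective γ) : IsSeparatelyAffine fun x => ((BA nvec A Ibar J x).submatrix ρ γ).det := by
  intro x p
  by_cases h : ∃ j₀ q, γ j₀ = Sum.inl q ∧ q.1 = p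
  · -- only the column `j₀` of the minor depends on `x p`, and it does so affinely
    obtain ⟨j₀, q, hj₀, rfl⟩ := h
    obtain ⟨f, hf⟩ := det_updateCol_comp_affine ((BA nvec A Ibar J x).submatrix ρ γ) j₀
      ((LinearMap.funLeft ℝ ℝ ρ).toAffineMap.comp (liftPtAffine n))
    refine ⟨f, fun z => ?_⟩
    rw [← hf]
    refine congrArg det (ext fun k c => ?_)
    rcases eq_or_ne c j₀ with rfl | hc
    · simp [BA, hj₀]
    · rw [updateCol_ne hc]
      exact BA_update_apply_of_ne nvec A Ibar J _ fun q' hq' hq'p =>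
        hc (hγ (hq'.trans (by rw [hj₀, Subtype.ext hq'p])))
  · simp only [not_exists, not_and] at h
    exact ⟨AffineMap.const ℝ _ ((BA nvec A Ibar J x).submatrix ρ γ).det, fun z =>
      congrArg det (ext fun k c => BA_update_apply_of_ne nvec A Ibar J _ (h c))⟩

/-- The index set `Ī_j = {j} × [n_j]` of the `j`-th block. -/
def blockIbar (j : Fin m) : Finset (Σ j : Fin m, Fin (nvec j)) :=
  Finset.univ.map (Embedding.sigmaMk j)

lemma nvec_le_rank_BA_blockIbar_iff (x : (Σ j : Fin m, Fin (nvec j)) → Euc n) (j : Fin m) :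
    nvec j ≤ (BA nvec A (blockIbar nvec j) ∅ x).rank ↔ AffineIndependent ℝ fun i => x ⟨j, i⟩ := by
  let e : Fin (nvec j) ≃
      ({p // p ∈ blockIbar nvec j} ⊕ Σ j' : {j' : Fin m // j' ∈ (∅ : Finset (Fin m))},
        Fin (nvec j'.1 + 1)) :=
    Equiv.ofBijective (fun i => Sum.inl ⟨⟨j, i⟩, Finset.mem_map_of_mem _ (Finset.mem_univ i)⟩)
      ⟨fun i i' h => (Embedding.sigmaMk j).injective (congrArg Subtype.val (Sum.inl_injective h)),
        fun c => by
          rcases c with ⟨p, hp⟩ | ⟨⟨j', hj'⟩, _⟩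
          · obtain ⟨i, -, rfl⟩ := Finset.mem_map.1 hp
            exact ⟨i, rfl⟩
          · exact absurd hj' (Finset.notMem_empty j')⟩
  have hcol : (BA nvec A (blockIbar nvec j) ∅ x).col ∘ e = fun i => liftPt (x ⟨j, i⟩) := rfl
  have hcard := (Fintype.card_congr e).symm.trans (Fintype.card_fin _)
  have hwidth := (BA nvec A (blockIbar nvec j) ∅ x).rank_le_card_width
  rw [hcard] at hwidth
  rw [← linearIndependent_liftPt_iff, ← hcol, linearIndependent_equiv,
    linearIndependent_iff_card_eq_finrank_span, Set.finrank, ← rank_eq_finrank_span_cols, hcard]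
  omega

end BA

section Stable

variable {n m : ℕ} {nvec : Fin m → ℕ} {A : ∀ j, Matrix (Fin (n + 1)) (Fin (nvec j + 1)) ℝ}
  {μ : (Σ j : Fin m, Fin (nvec j)) → Measure (Euc n)} {xg : (Σ j : Fin m, Fin (nvec j)) → Euc n}

lemma nvec_le_of_forall_rank_BA_blockIbar_le (hxg : xg ∈ univ.pi fun p => msupp (μ p))
    {j : Fin m} {R : ℕ}
    (hR : ∀ x ∈ univ.pi fun p => msupp (μ p), (BA nvec A (blockIbar nvec j) ∅ x).rank ≤ R)
    {y : Fin (nvec j) → Euc n} (hy : ∀ i, y i ∈ msupp (μ ⟨j, i⟩)) (hyA : AffineIndependent ℝ y) :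
    nvec j ≤ R := by
  refine le_trans ((nvec_le_rank_BA_blockIbar_iff nvec A (updateBlock xg j y) j).2
    (by simpa using hyA)) (hR (updateBlock xg j y) ?_)
  rintro ⟨j', i⟩ -
  rcases eq_or_ne j' j with rfl | hj
  · simpa using hy i
  · simpa [updateBlock_of_ne _ _ hj] using hxg ⟨j', i⟩ trivial

lemma affineIndependent_of_dist_lt {δ : ℝ} (hδ : 0 < δ) {j : Fin m}
    (h : ∀ x, dist x xg < δ → nvec j ≤ (BA nvec A (blockIbar nvec j) ∅ x).rank)
    {x y : Fin (nvec j) → Euc n} (hx : ∀ i, x i ∈ ball (xg ⟨j, i⟩) (δ / 2))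
    (hxy : dist x y < δ / 2) : AffineIndependent ℝ y := by
  have hdist : dist (updateBlock xg j y) xg < δ := (dist_pi_lt_iff hδ).2 fun ⟨j', i⟩ => by
    rcases eq_or_ne j' j with rfl | hj
    · calc dist (updateBlock xg j' y ⟨j', i⟩) (xg ⟨j', i⟩)
            ≤ dist (y i) (x i) + dist (x i) (xg ⟨j', i⟩) := by
              simpa using dist_triangle (y i) (x i) (xg ⟨j', i⟩)
        _ < δ / 2 + δ / 2 :=
          add_lt_add ((dist_comm (y i) (x i) ▸ dist_le_pi_dist x y i).trans_lt hxy) (hx i)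
        _ = δ := add_halves δ
    · simpa [updateBlock_of_ne _ _ hj] using hδ
  simpa using (nvec_le_rank_BA_blockIbar_iff nvec A _ j).1 (h _ hdist)

lemma CStable.mono {supp : (Σ j : Fin m, Fin (nvec j)) → Set (Euc n)} {c c' : ℝ}
    (h : CStable nvec A supp c) (hc : c' ≤ c) : CStable nvec A supp c' := fun Ibar J =>
  let ⟨r, hr⟩ := h Ibar J
  ⟨r, fun x hx => ⟨(hr x hx).1, (hr x hx).2.mono hc⟩⟩

lemma cStable_restrict_ball {r : Finset (Σ j : Fin m, Fin (nvec j)) × Finset (Fin m) → ℕ}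
    {c δ : ℝ} (hc : 0 < c) (hδ : 0 < δ)
    (hr : ∀ t, ∀ x ∈ univ.pi fun p => msupp (μ p), (BA nvec A t.1 t.2 x).rank ≤ r t)
    (hnear : ∀ x, dist x xg < δ → ∀ t, MrGe (BA nvec A t.1 t.2 x) (r t) c) :
    CStable nvec A (fun p => msupp ((μ p).restrict (ball (xg p) (δ / 2)))) c := by
  intro Ibar J
  refine ⟨r (Ibar, J), fun x hx => ?_⟩
  have hxS : x ∈ univ.pi fun p => msupp (μ p) := fun p _ =>
    (msupp_restrict_ball_subset _ _ _ (hx p)).2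
  have hxg : dist x xg < δ := (dist_pi_lt_iff hδ).2 fun p =>
    (mem_closedBall.1 (msupp_restrict_ball_subset _ _ _ (hx p)).1).trans_lt (half_lt_self hδ)
  have hM := hnear x hxg (Ibar, J)
  exact ⟨le_antisymm (hr (Ibar, J) x hxS) (hM.le_rank hc), hM⟩

end Stable

open Matrix in
theorem stmt_7_general {n m : ℕ} (V : Fin m → AffineSubspace ℝ (Euc n))
    (nvec : Fin m → ℕ) (hnvec : ∀ j, nvec j = Module.finrank ℝ (V j).direction)
    (A : ∀ j, Matrix (Fin (n + 1)) (Fin (nvec j + 1)) ℝ)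
    (μ : ∀ j : Fin m, Fin (nvec j) → Measure (Euc n))
    (hne : ∀ j i, μ j i ≠ 0)
    (hsupp : ∀ j i, μ j i (((V j : Set (Euc n)) ∩ closedBall 0 1)ᶜ) = 0)
    (hirr : ∀ j i, IrreducibleIn (μ j i) (V j)) :
    ∃ c : ℝ, 0 < c ∧
    ∃ (ctr : ∀ j : Fin m, Fin (nvec j) → Euc n) (rad : ∀ j : Fin m, Fin (nvec j) → ℝ),
      (∀ j i, 0 < rad j i) ∧
      (∀ j i, 0 < μ j i (ball (ctr j i) (rad j i))) ∧
      (∀ j, ∀ x : Fin (nvec j) → Euc n, (∀ i, x i ∈ ball (ctr j i) (rad j i)) →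
        ∀ y : Fin (nvec j) → Euc n, ¬ AffineIndependent ℝ y → c ≤ dist x y) ∧
      CStable nvec A
        (fun p => msupp ((μ p.1 p.2).restrict (ball (ctr p.1 p.2) (rad p.1 p.2)))) c := by
  have hV (p : Σ j : Fin m, Fin (nvec j)) : msupp (μ p.1 p.2) ⊆ V p.1 :=
    msupp_subset_of_ae (V p.1).closed_of_finiteDimensional
      (mem_of_superset (mem_ae_iff.2 (hsupp p.1 p.2)) inter_subset_left)
  obtain ⟨r, hr, xg, hxg, c, hc, hnear⟩ := exists_maxRank_minors_bounded_below_near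
    (T := Finset (Σ j : Fin m, Fin (nvec j)) × Finset (Fin m))
    (μ := fun p : Σ j : Fin m, Fin (nvec j) => μ p.1 p.2) (fun p => hne p.1 p.2) hV
    (fun p => hirr p.1 p.2) (fun t => BA nvec A t.1 t.2)
    (fun t _ => isSeparatelyAffine_det_submatrix_BA nvec A t.1 t.2) fun t => continuous_BA ..
  obtain ⟨δ, hδ, hδnear⟩ := Metric.eventually_nhds_iff.1 hnear
  have hblock (j : Fin m) (x) (hx : dist x xg < δ) :
      nvec j ≤ (BA nvec A (blockIbar nvec j) ∅ x).rank := by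
    obtain ⟨y, hyμ, hyA⟩ := exists_affineIndependent_mem_msupp (μ j) (hnvec j).le (hne j)
      (fun i => hV ⟨j, i⟩) (hirr j)
    exact (nvec_le_of_forall_rank_BA_blockIbar_le hxg (hr (blockIbar nvec j, ∅)) hyμ hyA).trans
      ((hδnear hx (blockIbar nvec j, ∅)).le_rank hc)
  refine ⟨min c (δ / 2), lt_min hc (half_pos hδ), fun j i => xg ⟨j, i⟩, fun _ _ => δ / 2,
    fun _ _ => half_pos hδ, fun j i => hxg ⟨j, i⟩ trivial _ (half_pos hδ),
    fun j x hx y hy => le_of_not_gt fun hxy => hy ?_,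
    (cStable_restrict_ball hc hδ hr hδnear).mono (min_le_left _ _)⟩
  exact affineIndependent_of_dist_lt hδ (hblock j) hx (hxy.trans_le (min_le_right _ _))

open Matrix in
/-- Reduction to stable position. Given flats `V j` of dimension `nvec j ≥ 1`
with fixed orthonormal bases `A j` of their linearizations, and irreducible measures `μ j i`
on `V j ∩ B(0,1)`, there are `c > 0` and balls `B_{j,i}` of positive measure such that each
product `B_{j,1} × ⋯ × B_{j,n_j}` is `c`-separated from the affinely dependent tuples, and the
restricted measures are in `c`-stable position. -/
theorem stmt_7 {n m : ℕ} (V : Fin m → AffineSubspace ℝ (Euc n))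
    (nvec : Fin m → ℕ) (hnvec : ∀ j, nvec j = Module.finrank ℝ (V j).direction)
    (hnv1 : ∀ j, 1 ≤ nvec j)
    (A : ∀ j, Matrix (Fin (n + 1)) (Fin (nvec j + 1)) ℝ)
    (hAorth : ∀ j, (A j)ᵀ * A j = 1)
    (hAspan : ∀ j, Submodule.span ℝ (Set.range (A j)ᵀ) =
      Submodule.span ℝ (liftPt '' ((V j : Set (Euc n)))))
    (μ : ∀ j : Fin m, Fin (nvec j) → Measure (Euc n))
    (hne : ∀ j i, μ j i ≠ 0)
    (hsupp : ∀ j i, μ j i (((V j : Set (Euc n)) ∩ closedBall 0 1)ᶜ) = 0)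
    (hirr : ∀ j i, IrreducibleIn (μ j i) (V j)) :
    ∃ c : ℝ, 0 < c ∧
    ∃ (ctr : ∀ j : Fin m, Fin (nvec j) → Euc n) (rad : ∀ j : Fin m, Fin (nvec j) → ℝ),
      (∀ j i, 0 < rad j i) ∧
      (∀ j i, 0 < μ j i (ball (ctr j i) (rad j i))) ∧
      (∀ j, ∀ x : Fin (nvec j) → Euc n, (∀ i, x i ∈ ball (ctr j i) (rad j i)) →
        ∀ y : Fin (nvec j) → Euc n, ¬ AffineIndependent ℝ y → c ≤ dist x y) ∧
      CStable nvec A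
        (fun p => msupp ((μ p.1 p.2).restrict (ball (ctr p.1 p.2) (rad p.1 p.2)))) c :=
  stmt_7_general V nvec hnvec A μ hne hsupp hirr
end
end

section
/- Let V_1,…,V_m ⊆ ℝ^n be an NC collection of affine flats, and let H ⊆ ℝ^n be a hyperplane which is generic in the following sense: for every x ∈ ℝ^n ∖ H and every nonempty I ⊆ [m], writing V_I = aff(V_j : j ∈ I) and π_x for the radial projection onto H from x (π_x(y) is the unique intersection point of the line through x and y with H, defined for y outside the translate of the direction of H through x), one has dim aff(π_x(V_I ∖ {x})) = dim V_I if x ∉ V_I, and dim aff(π_x(V_I ∖ {x})) = dim V_I − 1 if x ∈ V_I. Let Ω be the set of x ∈ ℝ^n ∖ H such that the collection of flats aff(π_x(V_j ∖ {x})), j ∈ [m], is not NC inside the (n−1)-dimensional affine space H (i.e. there exist flats F_1,…,F_r ⊆ H covering their union with Σ dim F_i ≤ n−2). Then there exists a constant C = C(n,m) such that Ω is finite with |Ω| ≤ C. -/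
/-!
A bad centre `x` comes with flats `F i ⊆ H` of total dimension at most `n - 2` covering the
projected flats. Every `V j` then lies in a cone `aff(x, F i)` or in the hyperplane through `x`
parallel to `H`; grouping the `V j` accordingly, genericity bounds the total dimension of the group
spans by `n - 2 + t`, where `t` is the number of group spans through `x`. Such a grouping determines
`x`: if `y ≠ x` lies in the same `t` group spans, their join contains the line `xy` and so has
dimension at least `t - 1` below their total; together with the other group spans it covers
`⋃ V j` with total dimension at most `n - 1`, contradicting NC. Hence `x` is determined by the
grouping and the set of groups through it, data ranging over a finite set depending only on `m`.
-/

open MeasureTheory Metric Set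

noncomputable section

/-- The image of `S \ {x}` under the radial projection from `x` onto the hyperplane `H`:
the points of `H` lying on a line through `x` and some `y ∈ S`, `y ≠ x`. -/
def radialImage {n : ℕ} (H : AffineSubspace ℝ (Euc n)) (x : Euc n) (S : Set (Euc n)) :
    Set (Euc n) :=
  {z | z ∈ H ∧ ∃ y ∈ S, y ≠ x ∧ z ∈ affineSpan ℝ ({x, y} : Set (Euc n))}

/-- A collection of flats contained in `H` is NC inside `H`: flats `F i ≤ H` covering their
union have total dimension at least `dim H`. -/
def NCInside {n m : ℕ} (H : AffineSubspace ℝ (Euc n))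
    (W : Fin m → AffineSubspace ℝ (Euc n)) : Prop :=
  ∀ (r : ℕ) (F : Fin r → AffineSubspace ℝ (Euc n)), (∀ i, F i ≤ H) →
    (⋃ j, (W j : Set (Euc n))) ⊆ (⋃ i, (F i : Set (Euc n))) →
    Module.finrank ℝ H.direction ≤ ∑ i, Module.finrank ℝ (F i).direction

open Module

namespace AffineSubspace

variable {k V P : Type*} [Field k] [AddCommGroup V] [Module k V] [AddTorsor V P]

theorem mem_of_mem_affineSpan_insert {F H : AffineSubspace k P} {x z : P} (hFH : F ≤ H)
    (hx : x ∉ H) (hz : z ∈ affineSpan k (insert x (F : Set P))) (hzH : z ∈ H) : z ∈ F := by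
  rcases (F : Set P).eq_empty_or_nonempty with hF | ⟨p, hp⟩
  · rw [hF, insert_empty_eq, mem_affineSpan_singleton] at hz
    exact absurd (hz ▸ hzH) hx
  obtain ⟨r, q, hq, rfl⟩ := (mem_affineSpan_insert_iff hp x z).1 hz
  have hr : r • (x -ᵥ p) ∈ H.direction := by
    simpa using vsub_mem_direction hzH (hFH hq)
  rcases eq_or_ne r 0 with rfl | hr0
  · simpa using hq
  · exact absurd ((vsub_right_mem_direction_iff_mem (hFH hp) x).1
      ((H.direction.smul_mem_iff hr0).1 hr)) hx

variable [FiniteDimensional k V]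

theorem finrank_direction_sup_add_one_le {A B : AffineSubspace k P} {x y : P} (hxy : x ≠ y)
    (hxA : x ∈ A) (hyA : y ∈ A) (hxB : x ∈ B) (hyB : y ∈ B) :
    finrank k (A ⊔ B).direction + 1 ≤ finrank k A.direction + finrank k B.direction := by
  have hdir : (A ⊔ B).direction = A.direction ⊔ B.direction := by
    rw [direction_sup hxA hxB, vsub_self, Submodule.span_singleton_eq_bot.2 rfl, sup_bot_eq]
  have hinf : 1 ≤ finrank k ↥(A.direction ⊓ B.direction) := by
    have hle : k ∙ (y -ᵥ x) ≤ A.direction ⊓ B.direction :=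
      (Submodule.span_singleton_le_iff_mem _ _).2
        ⟨vsub_mem_direction hyA hxA, vsub_mem_direction hyB hxB⟩
    simpa [finrank_span_singleton (vsub_ne_zero.2 hxy.symm)] using Submodule.finrank_mono hle
  have := Submodule.finrank_sup_add_finrank_inf_eq A.direction B.direction
  rw [hdir]
  omega

theorem finrank_direction_finsetSup_add_card_le {ι : Type*} (T : Finset ι)
    (N : ι → AffineSubspace k P) {x y : P} (hxy : x ≠ y) (hx : ∀ i ∈ T, x ∈ N i)
    (hy : ∀ i ∈ T, y ∈ N i) :
    finrank k (T.sup N).direction + T.card ≤ ∑ i ∈ T, finrank k (N i).direction + 1 := by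
  induction T using Finset.cons_induction with
  | empty => rw [Finset.sup_empty, direction_bot, finrank_bot]; simp
  | cons a S ha ih =>
    rw [Finset.sup_cons, Finset.sum_cons, Finset.card_cons]
    rcases S.eq_empty_or_nonempty with rfl | ⟨b, hb⟩
    · rw [Finset.sup_empty, sup_bot_eq]; simp
    have hS := ih (fun i hi => hx i (Finset.mem_cons_of_mem hi))
      (fun i hi => hy i (Finset.mem_cons_of_mem hi))
    have hsup := finrank_direction_sup_add_one_le hxy (hx a (Finset.mem_cons_self a S))
      (hy a (Finset.mem_cons_self a S))
      (Finset.le_sup (f := N) hb (hx b (Finset.mem_cons_of_mem hb)))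
      (Finset.le_sup (f := N) hb (hy b (Finset.mem_cons_of_mem hb)))
    omega

end AffineSubspace

theorem AffineSubspace.exists_le_of_subset_iUnion {E ι : Type*} [NormedAddCommGroup E]
    [NormedSpace ℝ E] [FiniteDimensional ℝ E] [Finite ι] {W : AffineSubspace ℝ E}
    (hW : (W : Set E).Nonempty) {F : ι → AffineSubspace ℝ E}
    (hWF : (W : Set E) ⊆ ⋃ i, (F i : Set E)) : ∃ i, W ≤ F i := by
  obtain ⟨p, hp⟩ := hW
  have : Nonempty W := ⟨⟨p, hp⟩⟩
  -- Otherwise the preimages of the `F i` in `W.direction` are proper affine subspaces, hence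
  -- Haar-null, and cannot cover it.
  let f : W.direction →ᵃ[ℝ] E :=
    W.subtype.comp (AffineEquiv.vaddConst ℝ (⟨p, hp⟩ : W)).toAffineMap
  have hf : ∀ v, f v = (v : E) +ᵥ p := fun v => rfl
  by_contra! hne
  have hproper : ∀ i, (F i).comap f ≠ ⊤ := by
    intro i htop
    refine hne i fun w hw => ?_
    have : (⟨w -ᵥ p, vsub_mem_direction hw hp⟩ : W.direction) ∈ (F i).comap f :=
      htop ▸ mem_top _ _ _
    simpa [hf] using this
  let : MeasurableSpace W.direction := borel _
  have : BorelSpace W.direction := ⟨rfl⟩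
  have hnull : Measure.addHaar (⋃ i, ((F i).comap f : Set W.direction)) = 0 :=
    measure_iUnion_null fun i => Measure.addHaar_affineSubspace _ _ (hproper i)
  refine (Measure.measure_univ_pos.2 (NeZero.ne _)).ne'
    (measure_mono_null (fun v _ => ?_) hnull)
  obtain ⟨_, ⟨i, rfl⟩, hi⟩ := hWF (vadd_mem_of_mem_direction v.2 hp : f v ∈ W)
  exact mem_iUnion.2 ⟨i, hi⟩

theorem Function.exists_fiber_representative {ι β : Type*} (φ : ι → β) :
    ∃ c : ι → ι, (∀ j, φ (c j) = φ j) ∧ ∀ j j', φ j = φ j' → c j = c j' := by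
  rcases isEmpty_or_nonempty ι with hι | hι
  · exact ⟨id, fun j => (IsEmpty.false j).elim, fun j => (IsEmpty.false j).elim⟩
  · exact ⟨invFun φ ∘ φ, fun j => invFun_eq ⟨j, rfl⟩, fun j j' h => by simp [h]⟩

theorem Finset.sum_le_sum_add_sum_of_le_comp {ι β : Type*} [Fintype ι] [Fintype β]
    {φ : ι → β} {c : ι → ι} (hφc : ∀ j, φ (c j) = φ j) (hc : ∀ j j', φ j = φ j' → c j = c j')
    {f t : ι → ℕ} {d : β → ℕ} (hf : ∀ k, f k ≤ d (φ k) + t k)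
    (hf₀ : ∀ k, k ∉ Set.range c → f k = 0) : ∑ k, f k ≤ ∑ b, d b + ∑ k, t k := by
  classical
  -- `f` lives on the representatives `range c`, on which `φ` is injective.
  have hinj : InjOn φ (univ.image c : Finset ι) := by
    simp only [coe_image, coe_univ, image_univ]
    rintro _ ⟨j, rfl⟩ _ ⟨j', rfl⟩ h
    exact hc _ _ (by rwa [hφc, hφc] at h)
  calc ∑ k, f k = ∑ k ∈ univ.image c, f k :=
        (Finset.sum_subset (subset_univ _) fun k _ hk => hf₀ k (by simpa using hk)).symm
    _ ≤ ∑ k ∈ univ.image c, (d (φ k) + t k) := Finset.sum_le_sum fun k _ => hf k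
    _ ≤ ∑ b ∈ (univ.image c).image φ, d b + ∑ k, t k := by
        rw [Finset.sum_add_distrib, Finset.sum_image hinj]
        gcongr
        exact subset_univ _
    _ ≤ ∑ b, d b + ∑ k, t k := by gcongr; exact subset_univ _

theorem NCFlats.le_sum_finrank {n m : ℕ} {V : Fin m → AffineSubspace ℝ (Euc n)} (hV : NCFlats V)
    {ι : Type*} [Fintype ι] (F : ι → AffineSubspace ℝ (Euc n))
    (hF : ⋃ j, (V j : Set (Euc n)) ⊆ ⋃ i, (F i : Set (Euc n))) :
    n ≤ ∑ i, finrank ℝ (F i).direction := by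
  let e := Fintype.equivFin ι
  have := hV _ (fun i => F (e.symm i))
    (hF.trans (e.symm.surjective.iUnion_comp fun i => (F i : Set (Euc n))).ge)
  rwa [Equiv.sum_comp e.symm (fun i => finrank ℝ (F i).direction)] at this

section RadialProjection

variable {n : ℕ} {H : AffineSubspace ℝ (Euc n)} {x : Euc n}

theorem radialImage_mono {S T : Set (Euc n)} (hST : S ⊆ T) :
    radialImage H x S ⊆ radialImage H x T := by
  rintro z ⟨hzH, y, hyS, hyx, hz⟩
  exact ⟨hzH, y, hST hyS, hyx, hz⟩

theorem radialImage_mk'_direction (hx : x ∉ H) :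
    radialImage H x (AffineSubspace.mk' x H.direction) = ∅ := by
  refine eq_empty_of_forall_notMem fun z ⟨hzH, y, hyP, _, hz⟩ => hx ?_
  have hxy : affineSpan ℝ {x, y} ≤ AffineSubspace.mk' x H.direction :=
    affineSpan_pair_le_of_mem_of_mem (AffineSubspace.self_mem_mk' x _) hyP
  have hzx : z -ᵥ x ∈ H.direction := AffineSubspace.mem_mk'.1 (hxy hz)
  exact (AffineSubspace.vsub_left_mem_direction_iff_mem hzH x).1 hzx

theorem radialImage_affineSpan_insert_subset {F : AffineSubspace ℝ (Euc n)} (hFH : F ≤ H)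
    (hx : x ∉ H) : radialImage H x (affineSpan ℝ (insert x (F : Set (Euc n)))) ⊆ F := by
  rintro z ⟨hzH, y, hy, _, hz⟩
  refine AffineSubspace.mem_of_mem_affineSpan_insert hFH hx ?_ hzH
  exact affineSpan_pair_le_of_mem_of_mem (mem_affineSpan ℝ (mem_insert x _)) hy hz

theorem exists_mem_radialImage (hHne : (H : Set (Euc n)).Nonempty)
    (hHdim : finrank ℝ H.direction + 1 = n) (hx : x ∉ H) {S : Set (Euc n)} {y : Euc n}
    (hyS : y ∈ S) (hy : y ∉ AffineSubspace.mk' x H.direction) :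
    ∃ z ∈ radialImage H x S, y ∈ line[ℝ, x, z] := by
  have hyx : y -ᵥ x ∉ H.direction := fun h => hy (AffineSubspace.mem_mk'.2 h)
  have htop : (line[ℝ, x, y]).direction ⊔ H.direction = ⊤ := by
    rw [direction_affineSpan, vectorSpan_pair_rev, sup_comm]
    refine Submodule.eq_top_of_finrank_eq ?_
    rw [Submodule.finrank_sup_span_singleton hyx, hHdim, finrank_euclideanSpace_fin]
  obtain ⟨z, hzl, hzH⟩ := AffineSubspace.inter_nonempty_of_nonempty_of_sup_direction_eq_top
    ⟨x, left_mem_affineSpan_pair ℝ x y⟩ hHne htop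
  have hzx : z ≠ x := fun h => hx (h ▸ hzH)
  refine ⟨z, ⟨hzH, y, hyS, fun h => hy (h ▸ AffineSubspace.self_mem_mk' x _), hzl⟩, ?_⟩
  exact (collinear_insert_of_mem_affineSpan_pair hzl).mem_affineSpan_of_mem_of_ne
    (by simp) (by simp) (by simp) hzx.symm

theorem le_mk'_or_exists_le_affineSpan_insert (hHne : (H : Set (Euc n)).Nonempty)
    (hHdim : finrank ℝ H.direction + 1 = n) (hx : x ∉ H) {ι : Type*} [Finite ι]
    {V : AffineSubspace ℝ (Euc n)} {F : ι → AffineSubspace ℝ (Euc n)}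
    (hVF : (affineSpan ℝ (radialImage H x V) : Set (Euc n)) ⊆ ⋃ i, (F i : Set (Euc n))) :
    V ≤ AffineSubspace.mk' x H.direction ∨
      ∃ i, V ≤ affineSpan ℝ (insert x (F i : Set (Euc n))) := by
  set P := AffineSubspace.mk' x H.direction
  by_cases hVP : V ≤ P
  · exact Or.inl hVP
  obtain ⟨y, hyV, hyP⟩ := SetLike.not_le_iff_exists.1 hVP
  obtain ⟨z, hz, -⟩ := exists_mem_radialImage hHne hHdim hx hyV hyP
  obtain ⟨i, hi⟩ :=
    AffineSubspace.exists_le_of_subset_iUnion ⟨z, subset_affineSpan ℝ _ hz⟩ hVF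
  let cover : Bool → AffineSubspace ℝ (Euc n) := fun b =>
    bif b then affineSpan ℝ (insert x (F i : Set (Euc n))) else P
  have hcover : (V : Set (Euc n)) ⊆ ⋃ b, (cover b : Set (Euc n)) := by
    intro y' hy'
    by_cases hy'P : y' ∈ P
    · exact mem_iUnion.2 ⟨false, hy'P⟩
    obtain ⟨z', hz', hy'z'⟩ := exists_mem_radialImage hHne hHdim hx hy' hy'P
    refine mem_iUnion.2 ⟨true, affineSpan_pair_le_of_mem_of_mem ?_ ?_ hy'z'⟩
    · exact mem_affineSpan ℝ (mem_insert x _)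
    · exact mem_affineSpan ℝ (mem_insert_of_mem x (hi (subset_affineSpan ℝ _ hz')))
  obtain ⟨_ | _, hb⟩ := AffineSubspace.exists_le_of_subset_iUnion ⟨y, hyV⟩ hcover
  · exact absurd hb hVP
  · exact Or.inr ⟨i, hb⟩

end RadialProjection

section Grouping

variable {n : ℕ} {ι κ : Type*} (V : ι → AffineSubspace ℝ (Euc n))

def flatSpan (I : Finset ι) : AffineSubspace ℝ (Euc n) :=
  affineSpan ℝ (⋃ j ∈ I, (V j : Set (Euc n)))

variable {V}

theorem le_flatSpan {I : Finset ι} {j : ι} (hj : j ∈ I) : V j ≤ flatSpan V I :=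
  fun _ hy => subset_affineSpan ℝ _ (mem_iUnion₂.2 ⟨j, hj, hy⟩)

theorem flatSpan_le {I : Finset ι} {A : AffineSubspace ℝ (Euc n)} (h : ∀ j ∈ I, V j ≤ A) :
    flatSpan V I ≤ A :=
  affineSpan_le.2 (iUnion₂_subset h)

theorem flatSpan_empty : flatSpan V (∅ : Finset ι) = ⊥ := by
  simp [flatSpan]

variable (V) [Fintype ι]

def groupSpan [DecidableEq κ] (c : ι → κ) (k : κ) : AffineSubspace ℝ (Euc n) :=
  flatSpan V (Finset.univ.filter fun j => c j = k)

open Classical in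
def groupsMeeting [DecidableEq κ] [Fintype κ] (c : ι → κ) (x : Euc n) : Finset κ :=
  Finset.univ.filter fun k => x ∈ groupSpan V c k

def IsDegenerateGrouping [DecidableEq κ] [Fintype κ] (c : ι → κ) (x : Euc n) : Prop :=
  ∑ k, finrank ℝ (groupSpan V c k).direction + 2 ≤ n + (groupsMeeting V c x).card

variable {V}

theorem le_groupSpan [DecidableEq κ] (c : ι → κ) (j : ι) : V j ≤ groupSpan V c (c j) :=
  le_flatSpan (by simp)

theorem mem_groupsMeeting [DecidableEq κ] [Fintype κ] {c : ι → κ} {x : Euc n} {k : κ} :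
    k ∈ groupsMeeting V c x ↔ x ∈ groupSpan V c k := by
  simp [groupsMeeting]

end Grouping

theorem NCFlats.eq_of_isDegenerateGrouping {n m : ℕ} {V : Fin m → AffineSubspace ℝ (Euc n)}
    (hV : NCFlats V) {κ : Type*} [DecidableEq κ] [Fintype κ] {c : Fin m → κ} {x y : Euc n}
    (hx : IsDegenerateGrouping V c x) (hxy : groupsMeeting V c x = groupsMeeting V c y) :
    x = y := by
  unfold IsDegenerateGrouping at hx
  by_contra hne
  set T := groupsMeeting V c x
  have hjoin := AffineSubspace.finrank_direction_finsetSup_add_card_le T (groupSpan V c) hne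
    (fun k hk => mem_groupsMeeting.1 hk) (fun k hk => mem_groupsMeeting.1 (hxy ▸ hk))
  let G : Option ↥Tᶜ → AffineSubspace ℝ (Euc n) := fun o =>
    o.elim (T.sup (groupSpan V c)) fun k => groupSpan V c k
  have hcover : ⋃ j, (V j : Set (Euc n)) ⊆ ⋃ o, (G o : Set (Euc n)) := by
    refine iUnion_subset fun j => ?_
    by_cases hj : c j ∈ T
    · exact subset_iUnion_of_subset none ((le_groupSpan c j).trans (Finset.le_sup hj))
    · exact subset_iUnion_of_subset (some ⟨c j, Finset.mem_compl.2 hj⟩) (le_groupSpan c j)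
  have hn : n ≤ finrank ℝ (T.sup (groupSpan V c)).direction +
      ∑ k : ↥Tᶜ, finrank ℝ (groupSpan V c k).direction :=
    (hV.le_sum_finrank G hcover).trans_eq (Fintype.sum_option _)
  rw [Finset.sum_coe_sort Tᶜ fun k => finrank ℝ (groupSpan V c k).direction] at hn
  have := Finset.sum_compl_add_sum T fun k => finrank ℝ (groupSpan V c k).direction
  omega

open Classical in
theorem finrank_flatSpan_le_of_generic {n m : ℕ} {V : Fin m → AffineSubspace ℝ (Euc n)}
    {H : AffineSubspace ℝ (Euc n)} {x : Euc n}
    (hgen : ∀ I : Finset (Fin m), I.Nonempty →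
      (x ∉ flatSpan V I →
        finrank ℝ (affineSpan ℝ (radialImage H x (flatSpan V I))).direction =
          finrank ℝ (flatSpan V I).direction) ∧
      (x ∈ flatSpan V I →
        finrank ℝ (affineSpan ℝ (radialImage H x (flatSpan V I))).direction =
          finrank ℝ (flatSpan V I).direction - 1))
    (I : Finset (Fin m)) :
    finrank ℝ (flatSpan V I).direction ≤
      finrank ℝ (affineSpan ℝ (radialImage H x (flatSpan V I))).direction +
        if x ∈ flatSpan V I then 1 else 0 := by
  rcases I.eq_empty_or_nonempty with rfl | hI
  · rw [flatSpan_empty, AffineSubspace.direction_bot, finrank_bot]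
    exact Nat.zero_le _
  split_ifs with hxI
  · have := (hgen I hI).2 hxI
    omega
  · exact ((hgen I hI).1 hxI).ge

open Classical in
theorem isDegenerateGrouping_of_finrank_le {n : ℕ} {ι β : Type*} [Fintype ι] [DecidableEq ι]
    [Fintype β] {V : ι → AffineSubspace ℝ (Euc n)} {x : Euc n} {φ : ι → β} {c : ι → ι}
    (hφc : ∀ j, φ (c j) = φ j) (hc : ∀ j j', φ j = φ j' → c j = c j') (d : β → ℕ)
    (hdim : ∀ k, finrank ℝ (groupSpan V c k).direction ≤
      d (φ k) + if x ∈ groupSpan V c k then 1 else 0)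
    (hd : ∑ b, d b + 2 ≤ n) : IsDegenerateGrouping V c x := by
  have hempty : ∀ k ∉ range c, finrank ℝ (groupSpan V c k).direction = 0 := by
    intro k hk
    have : Finset.univ.filter (fun j => c j = k) = ∅ :=
      Finset.filter_eq_empty_iff.2 fun j _ hj => hk ⟨j, hj⟩
    rw [groupSpan, this, flatSpan_empty, AffineSubspace.direction_bot, finrank_bot]
  have := Finset.sum_le_sum_add_sum_of_le_comp hφc hc (d := d)
    (t := fun k => if x ∈ groupSpan V c k then 1 else 0) hdim hempty
  rw [IsDegenerateGrouping, groupsMeeting, Finset.card_filter]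
  omega

open Classical in
theorem exists_isDegenerateGrouping {n m : ℕ} {V : Fin m → AffineSubspace ℝ (Euc n)}
    {H : AffineSubspace ℝ (Euc n)} {x : Euc n} (hHne : (H : Set (Euc n)).Nonempty)
    (hHdim : finrank ℝ H.direction + 1 = n) (hx : x ∉ H)
    (hgen : ∀ I : Finset (Fin m), finrank ℝ (flatSpan V I).direction ≤
      finrank ℝ (affineSpan ℝ (radialImage H x (flatSpan V I))).direction +
        if x ∈ flatSpan V I then 1 else 0)
    (hbad : ¬ NCInside H fun j => affineSpan ℝ (radialImage H x (V j : Set (Euc n)))) :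
    ∃ c : Fin m → Fin m, IsDegenerateGrouping V c x := by
  classical
  simp only [NCInside, not_forall, not_le] at hbad
  obtain ⟨r, F, hFH, hcov, hsum⟩ := hbad
  -- Each `V j` lies in a cone `aff(x, F i)` or in the hyperplane through `x` parallel to `H`;
  -- `G o` is the flat of `H` receiving the radial image of `cone o`.
  let cone : Option (Fin r) → AffineSubspace ℝ (Euc n) := fun o =>
    o.elim (AffineSubspace.mk' x H.direction) fun i => affineSpan ℝ (insert x (F i : Set (Euc n)))
  let G : Option (Fin r) → AffineSubspace ℝ (Euc n) := fun o => o.elim ⊥ F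
  have hcone : ∀ j, ∃ o, V j ≤ cone o := fun j =>
    (le_mk'_or_exists_le_affineSpan_insert hHne hHdim hx ((subset_iUnion (fun j =>
      (affineSpan ℝ (radialImage H x (V j)) : Set (Euc n))) j).trans hcov)).elim
      (fun h => ⟨none, h⟩) fun ⟨i, h⟩ => ⟨some i, h⟩
  choose φ hφ using hcone
  have hrad : ∀ o, radialImage H x (cone o) ⊆ G o := by
    rintro (_ | i)
    · simp [cone, radialImage_mk'_direction hx]
    · exact radialImage_affineSpan_insert_subset (hFH i) hx
  obtain ⟨c, hφc, hc⟩ := Function.exists_fiber_representative φ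
  have hdim : ∀ k, finrank ℝ (groupSpan V c k).direction ≤
      finrank ℝ (G (φ k)).direction + if x ∈ groupSpan V c k then 1 else 0 := by
    intro k
    have hle : groupSpan V c k ≤ cone (φ k) := flatSpan_le fun j hj => by
      rw [← (Finset.mem_filter.1 hj).2, hφc]
      exact hφ j
    exact (hgen _).trans (Nat.add_le_add_right (Submodule.finrank_mono (AffineSubspace.direction_le
      (affineSpan_le.2 ((radialImage_mono hle).trans (hrad _))))) _)
  refine ⟨c, isDegenerateGrouping_of_finrank_le hφc hc (fun o => finrank ℝ (G o).direction) hdim ?_⟩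
  rw [Fintype.sum_option, show G none = ⊥ from rfl, AffineSubspace.direction_bot, finrank_bot,
    zero_add]
  change ∑ i, finrank ℝ (F i).direction + 2 ≤ n
  omega

theorem Set.InjOn.finite_and_ncard_le {α β : Type*} [Finite β] {s : Set α} {f : α → β}
    (hf : InjOn f s) : s.Finite ∧ s.ncard ≤ Nat.card β :=
  ⟨.of_finite_image (toFinite _) hf, hf.ncard_image ▸ ncard_le_card _⟩

/-- Radial projections of NC flats. There is a constant `C = C(n,m)` such
that for every NC collection of flats `V 1, …, V m` in `ℝⁿ` and every generic hyperplane `H`,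
the set `Ω` of centers `x ∉ H` for which the radially projected flats fail to be NC inside `H`
is finite of cardinality at most `C`. -/
theorem stmt_13 (n m : ℕ) :
    ∃ C : ℕ, ∀ V : Fin m → AffineSubspace ℝ (Euc n), NCFlats V →
      ∀ H : AffineSubspace ℝ (Euc n), (H : Set (Euc n)).Nonempty →
        Module.finrank ℝ H.direction + 1 = n →
        (∀ x : Euc n, x ∉ H → ∀ I : Finset (Fin m), I.Nonempty →
          (x ∉ affineSpan ℝ (⋃ j ∈ I, (V j : Set (Euc n))) →
            Module.finrank ℝ (affineSpan ℝ (radialImage H x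
                ((affineSpan ℝ (⋃ j ∈ I, (V j : Set (Euc n))) : AffineSubspace ℝ (Euc n)) :
                  Set (Euc n)))).direction =
              Module.finrank ℝ (affineSpan ℝ (⋃ j ∈ I, (V j : Set (Euc n)))).direction) ∧
          (x ∈ affineSpan ℝ (⋃ j ∈ I, (V j : Set (Euc n))) →
            Module.finrank ℝ (affineSpan ℝ (radialImage H x
                ((affineSpan ℝ (⋃ j ∈ I, (V j : Set (Euc n))) : AffineSubspace ℝ (Euc n)) :
                  Set (Euc n)))).direction =
              Module.finrank ℝ (affineSpan ℝ (⋃ j ∈ I, (V j : Set (Euc n)))).direction - 1)) →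
        {x : Euc n | x ∉ H ∧
          ¬ NCInside H fun j => affineSpan ℝ (radialImage H x (V j : Set (Euc n)))}.Finite ∧
        {x : Euc n | x ∉ H ∧
          ¬ NCInside H fun j => affineSpan ℝ (radialImage H x (V j : Set (Euc n)))}.ncard ≤ C := by
  refine ⟨Nat.card ((Fin m → Fin m) × Finset (Fin m)), fun V hV H hHne hHdim hgen => ?_⟩
  have hc (x : Euc n) (hx : x ∉ H)
      (hbad : ¬ NCInside H fun j => affineSpan ℝ (radialImage H x (V j : Set (Euc n)))) :
      ∃ c : Fin m → Fin m, IsDegenerateGrouping V c x :=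
    exists_isDegenerateGrouping hHne hHdim hx (finrank_flatSpan_le_of_generic (hgen x hx)) hbad
  have : Nonempty (Fin m → Fin m) := ⟨id⟩
  choose! c hc using hc
  refine Set.InjOn.finite_and_ncard_le (f := fun x => (c x, groupsMeeting V (c x) x)) ?_
  rintro x ⟨hx, hbad⟩ y - hxy
  obtain ⟨hcxy, hTxy⟩ := Prod.mk.inj hxy
  exact hV.eq_of_isDegenerateGrouping (hc x hx hbad) (hTxy.trans (by rw [hcxy]))
end
end

section
/- Let μ_0, μ_1 be probability measures on ℝ^n with supports X_0, X_1 contained in the closed unit ball, let G ⊆ X_0 × X_1 be a Borel set such that for every (x_0,x_1) ∈ G, every δ > 0 and each j ∈ {0,1}, μ_j of the δ-neighborhood of the line through x_0 and x_1 is at most K·δ^σ. Let H ⊆ ℝ^n be a hyperplane with dist(H, X_0 ∪ X_1) ≥ 1/C' for some C' > 0, and for x ∈ X_0 let π_x be the map (defined off the translate of the direction of H through x) sending y to the unique intersection point of the line through x and y with H. Then there exists A = A(n,C') such that for every x ∈ X_0, the pushforward under π_x of μ_1 restricted to the section G|_x = {x_1 : (x,x_1) ∈ G} is (A^σ·K,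 σ)-Frostman on H: it gives every ball B(y,δ) with y ∈ H measure at most A^σ·K·δ^σ. -/
open MeasureTheory Metric Set

noncomputable section

/-!
Fix `x ∈ supp μ₀` and a point `w` of the section `G|ₓ` whose projection lands in `B(y, δ)`.
Every other such `v` satisfies `|v - x| ≤ 2`, while its projection `π_x v ∈ H` has
`|π_x v - x| ≥ 1/C'`; hence `v` is the image of `π_x v` under a homothety centred at `x` of ratio
at most `2C'`. The same homothety maps `π_x w` to a point of the line through `x` and `w`, so `v`
lies within `2C' · 2δ` of that line. The thin-lines bound for the pair `(x, w)` at scale `4C'δ`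
then gives the Frostman estimate with `A = 4C'`.
-/

theorem AffineSubspace.exists_lineMap_mem_of_vsub_notMem_direction
    {k V P : Type*} [Field k] [AddCommGroup V] [Module k V] [FiniteDimensional k V]
    [AddTorsor V P] {H : AffineSubspace k P} (hH : (H : Set P).Nonempty)
    (hdim : Module.finrank k H.direction + 1 = Module.finrank k V) {x y : P}
    (hxy : y -ᵥ x ∉ H.direction) : ∃ t : k, AffineMap.lineMap x y t ∈ H := by
  have htop : H.direction ⊔ line[k, x, y].direction = ⊤ := by
    rw [direction_affineSpan, vectorSpan_pair_rev]
    exact Submodule.eq_top_of_finrank_eq ((Submodule.finrank_sup_span_singleton hxy).trans hdim)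
  obtain ⟨p, hpH, hpL⟩ := AffineSubspace.inter_nonempty_of_nonempty_of_sup_direction_eq_top hH
    ⟨x, left_mem_affineSpan_pair k x y⟩ htop
  obtain ⟨t, rfl⟩ := mem_affineSpan_pair_iff_exists_lineMap_eq.mp hpL
  exact ⟨t, hpH⟩

theorem dist_homothety_homothety {𝕜 V P : Type*} [NormedField 𝕜] [SeminormedAddCommGroup V]
    [NormedSpace 𝕜 V] [PseudoMetricSpace P] [NormedAddTorsor V P] (c p₁ p₂ : P) (r : 𝕜) :
    dist (AffineMap.homothety c r p₁) (AffineMap.homothety c r p₂) = ‖r‖ * dist p₁ p₂ := by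
  simp only [AffineMap.homothety_apply, dist_eq_norm_vsub V, vadd_vsub_vadd_cancel_right,
    ← smul_sub, vsub_sub_vsub_cancel_right, norm_smul]

theorem exists_mem_dist_le_of_lineMap_eq {V P : Type*} [NormedAddCommGroup V]
    [NormedSpace ℝ V] [MetricSpace P] [NormedAddTorsor V P] {L : AffineSubspace ℝ P}
    {x v w z : P} {t R ε : ℝ} (hx : x ∈ L) (hw : w ∈ L) (hz : AffineMap.lineMap x v t = z)
    (hε : 0 < ε) (hzx : ε ≤ dist z x) (hvx : dist v x ≤ R) :
    ∃ p ∈ L, ε * dist v p ≤ R * dist z w := by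
  have hzx' : dist z x = |t| * dist v x := by
    rw [← hz, dist_lineMap_left, dist_comm, Real.norm_eq_abs]
  have ht : t ≠ 0 := by rintro rfl; rw [abs_zero, zero_mul] at hzx'; linarith
  -- `v` is the image of `z` under the homothety at `x` of ratio `t⁻¹`, which preserves `L`.
  refine ⟨AffineMap.homothety x t⁻¹ w, AffineMap.homothety_mem hx _ hw, ?_⟩
  have hv : AffineMap.homothety x t⁻¹ z = v := by
    rw [← hz, ← AffineMap.homothety_eq_lineMap, ← AffineMap.homothety_mul_apply,
      inv_mul_cancel₀ ht, AffineMap.homothety_one, AffineMap.id_apply]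
  rw [← hv, dist_homothety_homothety, Real.norm_eq_abs, abs_inv]
  have hεR : ε / |t| ≤ R :=
    (div_le_iff₀' (abs_pos.mpr ht)).mpr (hzx.trans (hzx'.trans_le (by gcongr)))
  calc ε * (|t|⁻¹ * dist z w) = ε / |t| * dist z w := by ring
    _ ≤ R * dist z w := by gcongr

def IsRadialProjection {k V P : Type*} [Ring k] [AddCommGroup V] [Module k V] [AddTorsor V P]
    (H : AffineSubspace k P) (x : P) (f : P → P) : Prop :=
  ∀ y z, z ∈ H → z ∈ line[k, x, y] → f y = z

theorem IsRadialProjection.exists_lineMap_eq {k V P : Type*} [Field k] [AddCommGroup V]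
    [Module k V] [FiniteDimensional k V] [AddTorsor V P] {H : AffineSubspace k P} {x : P}
    {f : P → P} (hf : IsRadialProjection H x f) (hH : (H : Set P).Nonempty)
    (hdim : Module.finrank k H.direction + 1 = Module.finrank k V) {y : P}
    (hy : y -ᵥ x ∉ H.direction) : ∃ t : k, AffineMap.lineMap x y t = f y ∧ f y ∈ H := by
  obtain ⟨t, ht⟩ := AffineSubspace.exists_lineMap_mem_of_vsub_notMem_direction hH hdim hy
  have hft := hf y _ ht (AffineMap.lineMap_mem_affineSpan_pair t x y)
  exact ⟨t, hft.symm, hft ▸ ht⟩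

theorem IsRadialProjection.exists_mem_affineSpan_pair_dist_le {V P : Type*}
    [NormedAddCommGroup V] [NormedSpace ℝ V] [FiniteDimensional ℝ V] [MetricSpace P]
    [NormedAddTorsor V P] {H : AffineSubspace ℝ P} {x : P} {f : P → P}
    (hf : IsRadialProjection H x f) (hH : (H : Set P).Nonempty)
    (hdim : Module.finrank ℝ H.direction + 1 = Module.finrank ℝ V) {ε R : ℝ} (hε : 0 < ε)
    (hxH : ∀ z ∈ H, ε ≤ dist z x) {v w : P} (hv : v -ᵥ x ∉ H.direction)
    (hw : w -ᵥ x ∉ H.direction) (hvx : dist v x ≤ R) :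
    ∃ p ∈ line[ℝ, x, w], ε * dist v p ≤ R * dist (f v) (f w) := by
  obtain ⟨t, hvt, hvH⟩ := hf.exists_lineMap_eq hH hdim hv
  obtain ⟨s, hws, -⟩ := hf.exists_lineMap_eq hH hdim hw
  exact exists_mem_dist_le_of_lineMap_eq (left_mem_affineSpan_pair ℝ x w)
    (hws ▸ AffineMap.lineMap_mem_affineSpan_pair s x w) hvt hε (hxH _ hvH) hvx

theorem IsRadialProjection.preimage_ball_inter_subset_thickening {V P : Type*}
    [NormedAddCommGroup V] [NormedSpace ℝ V] [FiniteDimensional ℝ V] [MetricSpace P]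
    [NormedAddTorsor V P] {H : AffineSubspace ℝ P} {x : P} {f : P → P}
    (hf : IsRadialProjection H x f) (hH : (H : Set P).Nonempty)
    (hdim : Module.finrank ℝ H.direction + 1 = Module.finrank ℝ V) {ε R : ℝ} (hε : 0 < ε)
    (hxH : ∀ z ∈ H, ε ≤ dist z x) {S : Set P}
    (hS : ∀ v ∈ S, v -ᵥ x ∉ H.direction ∧ dist v x ≤ R) {w y : P} {δ : ℝ}
    (hw : w ∈ f ⁻¹' ball y δ ∩ S) :
    f ⁻¹' ball y δ ∩ S ⊆ thickening (R * (2 * δ) / ε) line[ℝ, x, w] := by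
  rintro v ⟨hvy, hvS⟩
  obtain ⟨hvH, hvx⟩ := hS v hvS
  obtain ⟨p, hp, hvp⟩ :=
    hf.exists_mem_affineSpan_pair_dist_le hH hdim hε hxH hvH (hS w hw.2).1 hvx
  have hfvw : dist (f v) (f w) < 2 * δ := by
    linarith [dist_triangle_right (f v) (f w) y, mem_ball.mp (mem_preimage.mp hvy),
      mem_ball.mp (mem_preimage.mp hw.1)]
  have hvx₀ : v ≠ x := by
    rintro rfl
    exact hvH (vsub_self v ▸ H.direction.zero_mem)
  have hR : 0 < R := (dist_pos.mpr hvx₀).trans_le hvx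
  exact mem_thickening_iff.mpr ⟨p, hp, (lt_div_iff₀' hε).mpr (hvp.trans_lt (by gcongr))⟩

theorem stmt_18_general {n : ℕ} (μ₀ μ₁ : Measure (Euc n))
    (h₀ : msupp μ₀ ⊆ closedBall 0 1) (h₁ : msupp μ₁ ⊆ closedBall 0 1)
    (G : Set (Euc n × Euc n))
    (hGsub : G ⊆ (msupp μ₀) ×ˢ (msupp μ₁))
    (σ K : ℝ)
    (hthin : ∀ p ∈ G, ∀ δ : ℝ, 0 < δ →
      μ₀ (thickening δ
          ((affineSpan ℝ ({p.1, p.2} : Set (Euc n)) : AffineSubspace ℝ (Euc n)) :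
            Set (Euc n))) ≤ ENNReal.ofReal (K * δ ^ σ) ∧
      μ₁ (thickening δ
          ((affineSpan ℝ ({p.1, p.2} : Set (Euc n)) : AffineSubspace ℝ (Euc n)) :
            Set (Euc n))) ≤ ENNReal.ofReal (K * δ ^ σ))
    (H : AffineSubspace ℝ (Euc n)) (hHne : (H : Set (Euc n)).Nonempty)
    (hHdim : Module.finrank ℝ H.direction + 1 = n)
    (C' : ℝ) (hC' : 0 < C')
    (hHdist : ∀ z ∈ (H : Set (Euc n)), ∀ y ∈ msupp μ₀ ∪ msupp μ₁, 1 / C' ≤ dist z y) :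
    ∃ A : ℝ, 0 < A ∧
      ∀ x ∈ msupp μ₀, ∀ f : Euc n → Euc n, Measurable f →
        (∀ y z : Euc n, z ∈ H → z ∈ affineSpan ℝ ({x, y} : Set (Euc n)) → f y = z) →
        ∀ y ∈ (H : Set (Euc n)), ∀ δ : ℝ, 0 < δ →
          Measure.map f
              (μ₁.restrict ({x₁ | (x, x₁) ∈ G} \ {v : Euc n | v -ᵥ x ∈ H.direction}))
              (ball y δ) ≤ ENNReal.ofReal (A ^ σ * K * δ ^ σ) := by
  refine ⟨4 * C', by positivity, fun x hx f hfm hf y _ δ hδ => ?_⟩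
  set S : Set (Euc n) := {x₁ | (x, x₁) ∈ G} \ {v | v -ᵥ x ∈ H.direction}
  rw [Measure.map_apply hfm measurableSet_ball, Measure.restrict_apply (hfm measurableSet_ball)]
  obtain hempty | ⟨w, hw⟩ := (f ⁻¹' ball y δ ∩ S).eq_empty_or_nonempty
  · rw [hempty, measure_empty]
    exact zero_le
  have hS : ∀ v ∈ S, v -ᵥ x ∉ H.direction ∧ dist v x ≤ 2 := fun v ⟨hvG, hvH⟩ =>
    ⟨hvH, (dist_triangle_right v x 0).trans (by
      linarith [mem_closedBall.mp (h₁ (hGsub hvG).2), mem_closedBall.mp (h₀ hx)])⟩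
  have hthick := IsRadialProjection.preimage_ball_inter_subset_thickening hf hHne
    (hHdim.trans finrank_euclideanSpace_fin.symm) (one_div_pos.mpr hC')
    (fun z hz => hHdist z hz x (Or.inl hx)) hS hw
  rw [show 2 * (2 * δ) / (1 / C') = 4 * C' * δ by field_simp; ring] at hthick
  calc μ₁ (f ⁻¹' ball y δ ∩ S)
      ≤ μ₁ (thickening (4 * C' * δ) line[ℝ, x, w]) := measure_mono hthick
    _ ≤ ENNReal.ofReal (K * (4 * C' * δ) ^ σ) := (hthin (x, w) hw.2.1 _ (by positivity)).2
    _ = ENNReal.ofReal ((4 * C') ^ σ * K * δ ^ σ) := by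
      rw [Real.mul_rpow (by positivity) hδ.le]; ring_nf

/-- Radial projections of thin-line graphs are Frostman. Let `G` be a graph
with the thin-lines property for `(μ₀, μ₁)`, and `H` a hyperplane at distance `≥ 1/C'` from the
supports. Then there is `A = A(n, C')` such that for every `x ∈ supp μ₀`, the pushforward under
the radial projection `π_x` (any measurable map `f` realizing it) of `μ₁` restricted to the
section `G|_x` (off the translate of `dir H` through `x`) is `(A^σ·K, σ)`-Frostman on `H`. -/
theorem stmt_18 {n : ℕ} (μ₀ μ₁ : Measure (Euc n))
    [IsProbabilityMeasure μ₀] [IsProbabilityMeasure μ₁]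
    (h₀ : msupp μ₀ ⊆ closedBall 0 1) (h₁ : msupp μ₁ ⊆ closedBall 0 1)
    (G : Set (Euc n × Euc n)) (hGmeas : MeasurableSet G)
    (hGsub : G ⊆ (msupp μ₀) ×ˢ (msupp μ₁))
    (σ K : ℝ) (hσ : 0 < σ) (hK : 0 < K)
    (hthin : ∀ p ∈ G, ∀ δ : ℝ, 0 < δ →
      μ₀ (thickening δ
          ((affineSpan ℝ ({p.1, p.2} : Set (Euc n)) : AffineSubspace ℝ (Euc n)) :
            Set (Euc n))) ≤ ENNReal.ofReal (K * δ ^ σ) ∧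
      μ₁ (thickening δ
          ((affineSpan ℝ ({p.1, p.2} : Set (Euc n)) : AffineSubspace ℝ (Euc n)) :
            Set (Euc n))) ≤ ENNReal.ofReal (K * δ ^ σ))
    (H : AffineSubspace ℝ (Euc n)) (hHne : (H : Set (Euc n)).Nonempty)
    (hHdim : Module.finrank ℝ H.direction + 1 = n)
    (C' : ℝ) (hC' : 0 < C')
    (hHdist : ∀ z ∈ (H : Set (Euc n)), ∀ y ∈ msupp μ₀ ∪ msupp μ₁, 1 / C' ≤ dist z y) :
    ∃ A : ℝ, 0 < A ∧
      ∀ x ∈ msupp μ₀, ∀ f : Euc n → Euc n, Measurable f →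
        (∀ y z : Euc n, z ∈ H → z ∈ affineSpan ℝ ({x, y} : Set (Euc n)) → f y = z) →
        ∀ y ∈ (H : Set (Euc n)), ∀ δ : ℝ, 0 < δ →
          Measure.map f
              (μ₁.restrict ({x₁ | (x, x₁) ∈ G} \ {v : Euc n | v -ᵥ x ∈ H.direction}))
              (ball y δ) ≤ ENNReal.ofReal (A ^ σ * K * δ ^ σ) :=
  stmt_18_general μ₀ μ₁ h₀ h₁ G hGsub σ K hthin H hHne hHdim C' hC' hHdist
end
end
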